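/- arXiv:2110.11696 — 7 statements merged into one kernel-verified Lean document; each statement's English description precedes it below -/
import Mathlib

section
/- Let (X,d) be a complete, doubling and uniformly perfect metric space and 0 < c* < C* < ∞. Let α₁, α₂, α₃ > 0 and r₀ ∈ (0,1) satisfy (r₀/(1−r₀))·α₁ < min(α₂, α₃ − C*). Assume that for every r ∈ (0,r₀] and every net system A = ⋃_{k∈ℤ}{x_ω}_{ω∈Ω_k} with parameters (c*, C*, r), there exists a map π = π_A : Ω → Ω satisfying conditions (T1)–(T5). Then the conclusion of the dyadic cube theorem holds: there exist constants C₁, C₂, C₃ > 0 such that for every r ∈ (0,r₀] and every such net system there exist sets Q_ω ⊆ X (ω ∈ Ω) satisfying (D1)–(D5). -/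
set_option linter.unusedSectionVars false


open Metric Set

/-- A metric space is *doubling* if there is `N` such that every ball of radius `2R`
is covered by `N` balls of radius `R`. -/
def Doubling (X : Type*) [PseudoMetricSpace X] : Prop :=
  ∃ N : ℕ, ∀ (x : X) (R : ℝ), ∃ c : Fin N → X,
    ball x (2 * R) ⊆ ⋃ i, ball (c i) R

/-- A metric space is *uniformly perfect* if there is `γ > 1` such that
`B(x,γR) \ B(x,R) ≠ ∅` whenever `B(x,R) ≠ X`. -/
def UniformlyPerfect (X : Type*) [PseudoMetricSpace X] : Prop :=
  ∃ γ : ℝ, 1 < γ ∧ ∀ (x : X) (R : ℝ), 0 < R → ball x R ≠ univ →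
    (ball x (γ * R) \ ball x R).Nonempty

/-- A family of points `x (k, n)` (for `(k, n) ∈ I`, where `(k, n) ∈ I` represents
`ω = (k,n) ∈ Ω_k`) is a *net system with parameters `(c*, C*, r)`*:
(c) points on level `k` are `c* r^k`-separated, and
(C) every point of `X` is within distance `< C* r^k` of some level-`k` point. -/
structure IsNetSystem {X : Type*} [PseudoMetricSpace X] (cstar Cstar r : ℝ)
    (I : Set (ℤ × ℕ)) (x : ℤ × ℕ → X) : Prop where
  separated : ∀ (k : ℤ) (n m : ℕ), (k, n) ∈ I → (k, m) ∈ I → n ≠ m →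
    cstar * r ^ k ≤ dist (x (k, n)) (x (k, m))
  covering : ∀ (y : X) (k : ℤ), ∃ n : ℕ, (k, n) ∈ I ∧ dist y (x (k, n)) < Cstar * r ^ k

/-- The conditions (T1)–(T5) for a map `π : Ω → Ω` relative to a net system
`(I, x)` with parameters `(c*, C*, r)` and constants `α₁, α₂, α₃`. -/
structure SatisfiesT {X : Type*} [PseudoMetricSpace X] (Cstar r α₁ α₂ α₃ : ℝ)
    (I : Set (ℤ × ℕ)) (x : ℤ × ℕ → X) (π : ℤ × ℕ → ℤ × ℕ) : Prop where
  /-- `π` maps level `k+1` into level `k` (part of (T1)). -/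
  maps_into : ∀ (k : ℤ) (m : ℕ), (k + 1, m) ∈ I →
    π (k + 1, m) ∈ I ∧ (π (k + 1, m)).1 = k
  /-- `π(Ω_{k+1}) = Ω_k` (part of (T1)). -/
  surj : ∀ (k : ℤ) (n : ℕ), (k, n) ∈ I →
    ∃ m : ℕ, (k + 1, m) ∈ I ∧ π (k + 1, m) = (k, n)
  /-- `sup_ω #π⁻¹(ω) < ∞` (part of (T1)). -/
  fiber_bound : ∃ B : ℕ, ∀ ω : ℤ × ℕ,
    {lam | lam ∈ I ∧ π lam = ω}.Finite ∧ {lam | lam ∈ I ∧ π lam = ω}.ncard ≤ B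
  /-- (T2) -/
  T2 : ∀ (k : ℤ) (m : ℕ), (k + 1, m) ∈ I →
    dist (x (k + 1, m)) (x (π (k + 1, m))) < α₁ * r ^ k
  /-- (T3) -/
  T3 : ∀ (k : ℤ) (n m : ℕ), (k, n) ∈ I → (k + 1, m) ∈ I →
    dist (x (k, n)) (x (k + 1, m)) < α₂ * r ^ k → π (k + 1, m) = (k, n)
  /-- (T4) -/
  T4 : ∀ (k : ℤ) (n₁ n₂ : ℕ), (k, n₁) ∈ I → (k, n₂) ∈ I →
    (ball (x (k, n₁)) (α₃ * r ^ k) ∩ ball (x (k, n₂)) (α₃ * r ^ k)).Nonempty →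
    ∃ m₁ m₂ : ℕ, (k + 1, m₁) ∈ I ∧ (k + 1, m₂) ∈ I ∧
      (ball (x (k + 1, m₁)) (α₃ * r ^ (k + 1)) ∩
        ball (x (k + 1, m₂)) (α₃ * r ^ (k + 1))).Nonempty ∧
      π (k + 1, m₁) = (k, n₁) ∧ π (k + 1, m₂) = (k, n₂)
  /-- (T5) -/
  T5 : ∀ (k : ℤ) (m₁ n : ℕ), (k + 1, m₁) ∈ I → (k, n) ∈ I →
    Cstar * r ^ k ≤ dist (x (k + 1, m₁)) (x (π (k + 1, m₁))) →
    dist (x (k + 1, m₁)) (x (k, n)) < α₃ * r ^ k →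
    ∃ m₂ m₃ : ℕ, (k + 1, m₂) ∈ I ∧ (k + 1, m₃) ∈ I ∧
      (ball (x (k + 1, m₂)) (α₃ * r ^ (k + 1)) ∩
        ball (x (k + 1, m₃)) (α₃ * r ^ (k + 1))).Nonempty ∧
      π (k + 1, m₂) = π (k + 1, m₁) ∧ π (k + 1, m₃) = (k, n)

/-- `K_ω`: the closure of `⋃_{l ≥ 0} {x_λ : λ ∈ π^{-l}(ω)}`. -/
def Kset {X : Type*} [PseudoMetricSpace X] (I : Set (ℤ × ℕ)) (x : ℤ × ℕ → X)
    (π : ℤ × ℕ → ℤ × ℕ) (ω : ℤ × ℕ) : Set X :=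
  closure (⋃ l : ℕ, x '' {lam | lam ∈ I ∧ π^[l] lam = ω})


namespace DyadicAux

open Filter Function

/-- Bundled context for the construction. -/
structure Ctx (X : Type*) [MetricSpace X] where
  cstar : ℝ
  Cstar : ℝ
  α₁ : ℝ
  α₂ : ℝ
  α₃ : ℝ
  r₀ : ℝ
  r : ℝ
  I : Set (ℤ × ℕ)
  x : ℤ × ℕ → X
  pi : ℤ × ℕ → ℤ × ℕ
  hD : Doubling X
  hc : 0 < cstar
  hcC : cstar < Cstar
  hα₁ : 0 < α₁
  hα₂ : 0 < α₂
  hα₃ : 0 < α₃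
  hr0 : 0 < r
  hrr₀ : r ≤ r₀
  hr₀0 : 0 < r₀
  hr₀1 : r₀ < 1
  hcond : r₀ / (1 - r₀) * α₁ < min α₂ (α₃ - Cstar)
  net : IsNetSystem cstar Cstar r I x
  T : SatisfiesT Cstar r α₁ α₂ α₃ I x pi

variable {X : Type*} [MetricSpace X] [CompleteSpace X] (c : Ctx X)

/-- diameter-type constant -/
noncomputable def Ctx.t : ℝ := c.α₁ / (1 - c.r₀)

/-- one-level-down diameter constant -/
noncomputable def Ctx.s : ℝ := c.r₀ / (1 - c.r₀) * c.α₁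

noncomputable def Ctx.K : ℤ × ℕ → Set X := Kset c.I c.x c.pi

lemma Ctx.hr1 : c.r < 1 := lt_of_le_of_lt c.hrr₀ c.hr₀1

lemma Ctx.hrne : c.r ≠ 0 := ne_of_gt c.hr0

lemma Ctx.rk_pos (k : ℤ) : 0 < c.r ^ k := zpow_pos c.hr0 k

lemma Ctx.ht : 0 < c.t := div_pos c.hα₁ (by linarith [c.hr₀1])

lemma Ctx.hs : 0 < c.s :=
  mul_pos (div_pos c.hr₀0 (by linarith [c.hr₀1])) c.hα₁

lemma Ctx.hs_eq : c.s = c.r₀ * c.t := by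
  unfold Ctx.s Ctx.t; ring

lemma Ctx.hs_lt_α₂ : c.s < c.α₂ :=
  lt_of_lt_of_le c.hcond (min_le_left _ _)

lemma Ctx.hs_lt : c.s < c.α₃ - c.Cstar :=
  lt_of_lt_of_le c.hcond (min_le_right _ _)

lemma Ctx.hC0 : 0 < c.Cstar := lt_trans c.hc c.hcC

lemma Ctx.rk_add (k l : ℤ) : c.r ^ (k + l) = c.r ^ k * c.r ^ l :=
  zpow_add₀ c.hrne k l

/-- All iterated images of a member of `I` are in `I`, with computed level. -/
lemma Ctx.lvl (i : ℕ) : ∀ ω ∈ c.I, c.pi^[i] ω ∈ c.I ∧ (c.pi^[i] ω).1 = ω.1 - i := by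
  induction i with
  | zero => intro ω hω; simpa using hω
  | succ i ih =>
    intro ω hω
    have h1 : c.pi ω ∈ c.I ∧ (c.pi ω).1 = ω.1 - 1 := by
      have : ω = (ω.1 - 1 + 1, ω.2) := by
        ext <;> simp
      rw [this] at hω ⊢
      simpa using c.T.maps_into (ω.1 - 1) ω.2 hω
    have h2 := ih (c.pi ω) h1.1
    rw [iterate_succ_apply]
    refine ⟨h2.1, ?_⟩
    rw [h2.2, h1.2]
    push_cast
    ring

/-- (Chain) distance from a point to its `i`-fold ancestor. -/
lemma Ctx.chain (i : ℕ) : ∀ ω ∈ c.I,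
    dist (c.x ω) (c.x (c.pi^[i] ω)) ≤ c.t * c.r ^ (ω.1 - i) := by
  induction i with
  | zero =>
    intro ω hω
    simp only [iterate_zero, id_eq, dist_self]
    exact le_of_lt (mul_pos c.ht (c.rk_pos _))
  | succ i ih =>
    intro ω hω
    have hanc := c.lvl i ω hω
    have hstep : dist (c.x (c.pi^[i] ω)) (c.x (c.pi^[i+1] ω)) < c.α₁ * c.r ^ (ω.1 - i - 1) := by
      set μ := c.pi^[i] ω with hμ
      have hμI : μ ∈ c.I := hanc.1
      have hμl : μ.1 = ω.1 - i := hanc.2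
      have hform : μ = ((ω.1 - i - 1) + 1, μ.2) := by
        ext
        · rw [hμl]; push_cast; ring
        · rfl
      have := c.T.T2 (ω.1 - i - 1) μ.2 (by rw [← hform]; exact hμI)
      rw [← hform] at this
      rw [iterate_succ_apply']
      exact this
    calc dist (c.x ω) (c.x (c.pi^[i+1] ω))
        ≤ dist (c.x ω) (c.x (c.pi^[i] ω)) + dist (c.x (c.pi^[i] ω)) (c.x (c.pi^[i+1] ω)) :=
          dist_triangle _ _ _
      _ ≤ c.t * c.r ^ (ω.1 - i) + c.α₁ * c.r ^ (ω.1 - i - 1) := by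
          exact add_le_add (ih ω hω) (le_of_lt hstep)
      _ ≤ c.t * c.r ^ (ω.1 - (i+1)) := by
          have he2 : ω.1 - (i:ℤ) - 1 = ω.1 - ((i:ℤ)+1) := by ring
          have he : ω.1 - (i:ℤ) = (ω.1 - ((i:ℤ)+1)) + 1 := by ring
          push_cast
          rw [he2, he, c.rk_add, zpow_one]
          have hpos := c.rk_pos (ω.1 - ((i:ℤ)+1))
          have key : c.t * c.r + c.α₁ ≤ c.t := by
            have h1r₀ : (0:ℝ) < 1 - c.r₀ := by linarith [c.hr₀1]
            have heq : c.t * (1 - c.r₀) = c.α₁ := by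
              unfold Ctx.t; field_simp
            nlinarith [c.ht, c.hrr₀]
          nlinarith [c.ht, c.hr0, c.hα₁, hpos]


/-- The set of net points of descendants of `ω`. -/
def Ctx.S (ω : ℤ × ℕ) : Set X := ⋃ l : ℕ, c.x '' {lam | lam ∈ c.I ∧ c.pi^[l] lam = ω}

lemma Ctx.K_eq (ω : ℤ × ℕ) : c.K ω = closure (c.S ω) := rfl

lemma Ctx.K_closed (ω : ℤ × ℕ) : IsClosed (c.K ω) := isClosed_closure

lemma Ctx.mem_S (q ω : ℤ × ℕ) (hq : q ∈ c.I) (i : ℕ) (hi : c.pi^[i] q = ω) :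
    c.x q ∈ c.S ω := by
  exact Set.mem_iUnion.2 ⟨i, Set.mem_image_of_mem _ ⟨hq, hi⟩⟩

lemma Ctx.self_mem_S (ω : ℤ × ℕ) (hω : ω ∈ c.I) : c.x ω ∈ c.S ω :=
  c.mem_S ω ω hω 0 rfl

lemma Ctx.self_mem_K (ω : ℤ × ℕ) (hω : ω ∈ c.I) : c.x ω ∈ c.K ω :=
  subset_closure (c.self_mem_S ω hω)

lemma Ctx.S_mono (q ω : ℤ × ℕ) (i : ℕ) (hi : c.pi^[i] q = ω) :
    c.S q ⊆ c.S ω := by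
  intro y hy
  rcases Set.mem_iUnion.1 hy with ⟨l, hl⟩
  rcases hl with ⟨lam, ⟨hlamI, hlam⟩, rfl⟩
  refine Set.mem_iUnion.2 ⟨l + i, Set.mem_image_of_mem _ ⟨hlamI, ?_⟩⟩
  rw [← Nat.add_comm i l, Function.iterate_add_apply, hlam, hi]

lemma Ctx.K_mono (q ω : ℤ × ℕ) (i : ℕ) (hi : c.pi^[i] q = ω) :
    c.K q ⊆ c.K ω :=
  closure_mono (c.S_mono q ω i hi)

/-- Distance bound for points of `S ω`. -/
lemma Ctx.S_diam (ω : ℤ × ℕ) (hω : ω ∈ c.I) {y : X} (hy : y ∈ c.S ω) :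
    dist y (c.x ω) ≤ c.t * c.r ^ ω.1 := by
  rcases Set.mem_iUnion.1 hy with ⟨l, hl⟩
  rcases hl with ⟨lam, ⟨hlamI, hlam⟩, rfl⟩
  have := c.chain l lam hlamI
  rw [hlam] at this
  have hlev := (c.lvl l lam hlamI).2
  rw [hlam] at hlev
  rw [hlev]
  exact this

lemma Ctx.K_diam (ω : ℤ × ℕ) (hω : ω ∈ c.I) :
    c.K ω ⊆ Metric.closedBall (c.x ω) (c.t * c.r ^ ω.1) := by
  rw [c.K_eq]
  refine closure_minimal ?_ Metric.isClosed_closedBall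
  intro y hy
  exact c.S_diam ω hω hy

/-- (T3 chain) If `p` is a deep point near both `u` and near the level-`k` point `ω`
(in the `α₂` sense), then `p` is a descendant of `ω`. -/
lemma Ctx.t3chain (ω : ℤ × ℕ) (hω : ω ∈ c.I) (u : X) (p : ℤ × ℕ) (hp : p ∈ c.I)
    (i : ℕ) (hi : 1 ≤ i) (hlev : p.1 = ω.1 + i)
    (hd : dist u (c.x ω) + dist u (c.x p) + c.s * c.r ^ ω.1 < c.α₂ * c.r ^ ω.1) :
    c.pi^[i] p = ω := by
  set k := ω.1 with hk
  obtain ⟨j, rfl⟩ : ∃ j : ℕ, i = j + 1 := ⟨i - 1, by omega⟩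
  set b := c.pi^[j] p with hb
  have hbI : b ∈ c.I := (c.lvl j p hp).1
  have hbl : b.1 = k + 1 := by
    have := (c.lvl j p hp).2
    rw [← hb] at this
    rw [this, hlev]; push_cast; ring
  -- distance from x p to x b
  have hchain : dist (c.x p) (c.x b) ≤ c.t * c.r ^ (k + 1) := by
    have := c.chain j p hp
    rw [← hb] at this
    have he : p.1 - (j:ℤ) = k + 1 := by rw [hlev]; push_cast; ring
    rw [he] at this
    exact this
  have htr : c.t * c.r ^ (k+1) ≤ c.s * c.r ^ k := by
    rw [c.rk_add, zpow_one, c.hs_eq]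
    have h := mul_le_mul_of_nonneg_left c.hrr₀ (le_of_lt (mul_pos c.ht (c.rk_pos k)))
    nlinarith [h]
  have hdist : dist (c.x ω) (c.x b) < c.α₂ * c.r ^ k := by
    calc dist (c.x ω) (c.x b) ≤ dist u (c.x ω) + dist u (c.x p) + dist (c.x p) (c.x b) := by
          have := dist_triangle (c.x ω) (c.x p) (c.x b)
          have h2 := dist_triangle (c.x ω) u (c.x p)
          rw [dist_comm (c.x ω) u] at h2
          linarith
      _ ≤ dist u (c.x ω) + dist u (c.x p) + c.s * c.r ^ k := by
          linarith [le_trans hchain htr]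
      _ < c.α₂ * c.r ^ k := hd
  -- apply T3
  have hωform : ω = (k, ω.2) := by rw [hk]
  have hbform : b = (k + 1, b.2) := by rw [← hbl]
  have hT3 := c.T.T3 k ω.2 b.2 (by rw [← hωform]; exact hω) (by rw [← hbform]; exact hbI)
    (by rw [← hωform, ← hbform]; exact hdist)
  rw [← hbform, ← hωform] at hT3
  rw [iterate_succ_apply', ← hb, hT3]

/-- Doubling: separated sets in balls are finite. -/
lemma Ctx.finite_in_ball (k : ℤ) (y : X) (R : ℝ) :
    {n : ℕ | (k, n) ∈ c.I ∧ dist (c.x (k, n)) y ≤ R}.Finite := by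
  obtain ⟨N, hN⟩ := c.hD
  set ρ := c.cstar * c.r ^ k / 3 with hρ
  have hρpos : 0 < ρ := by
    have := c.rk_pos k
    have := c.hc
    positivity
  have cover : ∀ (j : ℕ) (z : X), ∃ s : Set X, s.Finite ∧
      Metric.ball z (2 ^ j * ρ) ⊆ ⋃ w ∈ s, Metric.ball w ρ := by
    intro j
    induction j with
    | zero =>
      intro z
      refine ⟨{z}, Set.finite_singleton z, ?_⟩
      simp
    | succ j ih =>
      intro z
      obtain ⟨ctr0, hctr0⟩ := hN z (2 ^ j * ρ)
      choose s hsfin hs using fun (i : Fin N) => ih (ctr0 i)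
      refine ⟨⋃ i, s i, Set.finite_iUnion hsfin, ?_⟩
      have h2 : (2:ℝ) ^ (j+1) * ρ = 2 * (2 ^ j * ρ) := by ring
      rw [h2]
      intro w hw
      rcases Set.mem_iUnion.1 (hctr0 hw) with ⟨i, hi⟩
      rcases Set.mem_iUnion₂.1 (hs i hi) with ⟨v, hv, hvw⟩
      exact Set.mem_iUnion₂.2 ⟨v, Set.mem_iUnion.2 ⟨i, hv⟩, hvw⟩
  obtain ⟨j, hj⟩ := pow_unbounded_of_one_lt (R / ρ) (by norm_num : (1:ℝ) < 2)
  have hRj : R < 2 ^ j * ρ := by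
    rw [div_lt_iff₀ hρpos] at hj
    linarith
  obtain ⟨s, hsfin, hscov⟩ := cover j y
  have hsub : {n : ℕ | (k, n) ∈ c.I ∧ dist (c.x (k, n)) y ≤ R} ⊆
      ⋃ w ∈ s, {n : ℕ | (k, n) ∈ c.I ∧ c.x (k, n) ∈ Metric.ball w ρ} := by
    intro n hn
    have : c.x (k, n) ∈ Metric.ball y (2 ^ j * ρ) := by
      rw [Metric.mem_ball]
      exact lt_of_le_of_lt hn.2 hRj
    rcases Set.mem_iUnion₂.1 (hscov this) with ⟨w, hw, hww⟩
    exact Set.mem_iUnion₂.2 ⟨w, hw, hn.1, hww⟩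
  refine Set.Finite.subset (Set.Finite.biUnion hsfin (fun w _ => ?_)) hsub
  refine Set.Subsingleton.finite ?_
  intro n hn m hm
  by_contra hnm
  have hsep := c.net.separated k n m hn.1 hm.1 hnm
  have h1 := hn.2
  have h2 := hm.2
  rw [Metric.mem_ball] at h1 h2
  rw [dist_comm] at h2
  have : dist (c.x (k, n)) (c.x (k, m)) < 2 * ρ :=
    lt_of_le_of_lt (dist_triangle _ w _) (by linarith)
  rw [hρ] at this
  have := c.rk_pos k
  nlinarith [c.hc]



/-- There exist arbitrarily deep levels with small covering radius. -/
lemma Ctx.exists_deep (k : ℤ) (ε η : ℝ) (hε : 0 < ε) (hη : 0 < η) (L : ℕ) :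
    ∃ l : ℕ, L ≤ l ∧ 1 ≤ l ∧ c.Cstar * c.r ^ (k + (l:ℤ)) < ε ∧ c.Cstar * c.r ^ (l:ℤ) < η := by
  have htend : Tendsto (fun n : ℕ => c.r ^ n) atTop (nhds 0) :=
    tendsto_pow_atTop_nhds_zero_of_lt_one (le_of_lt c.hr0) c.hr1
  have hev : ∀ᶠ l : ℕ in atTop, c.r ^ l < min (ε / (c.Cstar * c.r ^ k)) (η / c.Cstar) := by
    have hpos : 0 < min (ε / (c.Cstar * c.r ^ k)) (η / c.Cstar) := by
      have := c.rk_pos k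
      have := c.hC0
      exact lt_min (by positivity) (by positivity)
    filter_upwards [htend.eventually (gt_mem_nhds hpos)] with l hl using hl
  obtain ⟨l, hlL, hl⟩ := ((hev.and (eventually_ge_atTop (max L 1))).exists)
  refine ⟨l, le_trans (le_max_left _ _) hl, le_trans (le_max_right _ _) hl, ?_, ?_⟩
  · have h1 := lt_of_lt_of_le hlL (min_le_left _ _)
    have hck : 0 < c.Cstar * c.r ^ k := mul_pos c.hC0 (c.rk_pos k)
    rw [lt_div_iff₀ hck] at h1
    rw [c.rk_add]
    have : (c.r : ℝ) ^ (l:ℤ) = c.r ^ l := zpow_natCast c.r l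
    nlinarith [this]
  · have h2 := lt_of_lt_of_le hlL (min_le_right _ _)
    rw [lt_div_iff₀ c.hC0] at h2
    rw [zpow_natCast]
    linarith

/-- Core approximation: if `u` is `(α₂ - s)`-close to `x ω`, then `u` is approximated by
net points of arbitrarily deep descendants of `ω`. -/
lemma Ctx.approx_desc (ω : ℤ × ℕ) (hω : ω ∈ c.I) (u : X)
    (hu : dist u (c.x ω) + c.s * c.r ^ ω.1 < c.α₂ * c.r ^ ω.1)
    (ε : ℝ) (hε : 0 < ε) (L : ℕ) :
    ∃ q ∈ c.I, ∃ i : ℕ, 1 ≤ i ∧ L ≤ i ∧ c.pi^[i] q = ω ∧ dist u (c.x q) < ε ∧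
      q.1 = ω.1 + i := by
  set k := ω.1 with hk
  have hslack : 0 < c.α₂ * c.r ^ k - dist u (c.x ω) - c.s * c.r ^ k := by linarith
  obtain ⟨i, hiL, hi1, hdeep, -⟩ := c.exists_deep k (min ε (c.α₂ * c.r ^ k - dist u (c.x ω) - c.s * c.r ^ k))
    1 (lt_min hε hslack) (by norm_num) L
  obtain ⟨n, hnI, hnd⟩ := c.net.covering u (k + i)
  refine ⟨(k + i, n), hnI, i, hi1, hiL, ?_, ?_, rfl⟩
  · apply c.t3chain ω hω u (k + (i:ℤ), n) hnI i hi1 rfl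
    have := lt_of_lt_of_le hdeep (min_le_right _ _)
    calc dist u (c.x ω) + dist u (c.x (k + (i:ℤ), n)) + c.s * c.r ^ k
        < dist u (c.x ω) + (c.α₂ * c.r ^ k - dist u (c.x ω) - c.s * c.r ^ k) + c.s * c.r ^ k := by
          linarith [lt_trans hnd this]
      _ = c.α₂ * c.r ^ k := by ring
  · exact lt_of_lt_of_le (lt_trans hnd hdeep) (min_le_left _ _)

/-- If `u` is `(α₂ - s)`-close to `x ω` then `u ∈ K ω`. -/
lemma Ctx.mem_K_of_close (ω : ℤ × ℕ) (hω : ω ∈ c.I) (u : X)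
    (hu : dist u (c.x ω) < (c.α₂ - c.s) * c.r ^ ω.1) : u ∈ c.K ω := by
  rw [c.K_eq, Metric.mem_closure_iff]
  intro ε hε
  have hu' : dist u (c.x ω) + c.s * c.r ^ ω.1 < c.α₂ * c.r ^ ω.1 := by
    have := c.rk_pos ω.1
    nlinarith
  obtain ⟨q, hqI, i, -, -, hqdesc, hqd, -⟩ := c.approx_desc ω hω u hu' ε hε 0
  exact ⟨c.x q, c.mem_S q ω hqI i hqdesc, hqd⟩

/-- The inner radius constant. -/
noncomputable def Ctx.δ : ℝ := min (c.cstar / 2) ((c.α₂ - c.s) / 2)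

lemma Ctx.hδ : 0 < c.δ := lt_min (by linarith [c.hc]) (by linarith [c.hs_lt_α₂])

lemma Ctx.hδ_le₁ : c.δ ≤ c.cstar / 2 := min_le_left _ _

lemma Ctx.hδ_le₂ : c.δ ≤ (c.α₂ - c.s) / 2 := min_le_right _ _

/-- Inner ball: `B(x_ω, δ r^k) ⊆ K_ω`. -/
lemma Ctx.ball_subset_K (ω : ℤ × ℕ) (hω : ω ∈ c.I) :
    Metric.ball (c.x ω) (c.δ * c.r ^ ω.1) ⊆ c.K ω := by
  intro u hu
  rw [Metric.mem_ball] at hu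
  apply c.mem_K_of_close ω hω
  have hrk := c.rk_pos ω.1
  have h2 := c.hδ_le₂
  nlinarith [c.hs_lt_α₂, mul_le_mul_of_nonneg_right h2 (le_of_lt hrk)]

/-- Inner ball avoids all other same-level `K`s. -/
lemma Ctx.ball_disjoint_K (ω lam : ℤ × ℕ) (hω : ω ∈ c.I) (hlam : lam ∈ c.I)
    (hlev : lam.1 = ω.1) (hne : lam ≠ ω) (u : X)
    (hu : dist u (c.x ω) < c.δ * c.r ^ ω.1) : u ∉ c.K lam := by
  intro humem
  have hrk := c.rk_pos ω.1
  set ε : ℝ := min ((c.cstar / 2) * c.r ^ ω.1) (((c.α₂ - c.s) / 4) * c.r ^ ω.1) with hεdef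
  have hεpos : 0 < ε := by
    apply lt_min
    · nlinarith [c.hc]
    · nlinarith [c.hs_lt_α₂]
  rw [c.K_eq, Metric.mem_closure_iff] at humem
  obtain ⟨b, hbS, hbd⟩ := humem ε hεpos
  rcases Set.mem_iUnion.1 hbS with ⟨i, hb⟩
  rcases hb with ⟨p, ⟨hpI, hpdesc⟩, rfl⟩
  rcases Nat.eq_zero_or_pos i with hi0 | hipos
  · -- p = lam, contradiction with separation
    subst hi0
    simp only [iterate_zero, id_eq] at hpdesc
    subst hpdesc
    have hωe : ω = (ω.1, ω.2) := rfl
    have hpe : p = (ω.1, p.2) := by rw [← hlev]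
    have hne2 : ω.2 ≠ p.2 := by
      intro h
      exact hne (by rw [hpe, ← h, ← hωe])
    have hsep := c.net.separated ω.1 ω.2 p.2 (by rw [← hωe]; exact hω)
      (by rw [← hpe]; exact hpI) hne2
    rw [← hωe, ← hpe] at hsep
    have htri : dist (c.x ω) (c.x p) ≤ dist u (c.x ω) + dist u (c.x p) := by
      rw [dist_comm u (c.x ω)]
      exact dist_triangle _ _ _
    have hδc := c.hδ_le₁
    have hεc : ε ≤ (c.cstar / 2) * c.r ^ ω.1 := min_le_left _ _
    nlinarith
  · -- p is a deep descendant of lam; t3chain forces it to be a descendant of ω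
    have hplev : p.1 = ω.1 + i := by
      have := (c.lvl i p hpI).2
      rw [hpdesc, hlev] at this
      omega
    have hchain := c.t3chain ω hω u p hpI i hipos hplev (by
      have hδ2 := c.hδ_le₂
      have hε2 : ε ≤ ((c.α₂ - c.s) / 4) * c.r ^ ω.1 := min_le_right _ _
      nlinarith [c.hs])
    rw [hpdesc] at hchain
    exact hne hchain


lemma Ctx.exists_small (C : ℝ) (hC : 0 < C) (k : ℤ) (ε : ℝ) (hε : 0 < ε) (L : ℕ) :
    ∃ l : ℕ, L ≤ l ∧ C * c.r ^ (k + (l:ℤ)) < ε := by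
  have htend : Tendsto (fun n : ℕ => c.r ^ n) atTop (nhds 0) :=
    tendsto_pow_atTop_nhds_zero_of_lt_one (le_of_lt c.hr0) c.hr1
  have hpos : 0 < ε / (C * c.r ^ k) := by
    have := c.rk_pos k
    positivity
  obtain ⟨l, hlL, hl⟩ := ((htend.eventually (gt_mem_nhds hpos)).and (eventually_ge_atTop L)).exists
  refine ⟨l, hl, ?_⟩
  have hck : 0 < C * c.r ^ k := mul_pos hC (c.rk_pos k)
  rw [lt_div_iff₀ hck] at hlL
  rw [c.rk_add, zpow_natCast]
  nlinarith

/-- Descendants of `ω` at depth `l`. -/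
def Ctx.Dset (ω : ℤ × ℕ) (l : ℕ) : Set (ℤ × ℕ) := {p | p ∈ c.I ∧ c.pi^[l] p = ω}

lemma Ctx.Dset_finite (ω : ℤ × ℕ) (l : ℕ) : (c.Dset ω l).Finite := by
  induction l with
  | zero =>
    apply Set.Finite.subset (Set.finite_singleton ω)
    intro p hp
    simpa using hp.2
  | succ l ih =>
    obtain ⟨B, hB⟩ := c.T.fiber_bound
    apply Set.Finite.subset (Set.Finite.biUnion ih (fun q _ => (hB q).1))
    intro p hp
    have hpI := hp.1
    have hpiI : c.pi p ∈ c.I := by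
      have h1 := (c.lvl 1 p hp.1).1
      rwa [Function.iterate_one] at h1
    refine Set.mem_iUnion₂.2 ⟨c.pi p, ⟨hpiI, ?_⟩, hpI, rfl⟩
    have := hp.2
    rwa [iterate_succ_apply] at this

lemma Ctx.Dset_level (ω : ℤ × ℕ) (l : ℕ) (p : ℤ × ℕ) (hp : p ∈ c.Dset ω l) :
    p.1 = ω.1 + l := by
  have := (c.lvl l p hp.1).2
  rw [hp.2] at this
  omega

lemma Ctx.Dset_mem_I (ω : ℤ × ℕ) (l : ℕ) (p : ℤ × ℕ) (hp : p ∈ c.Dset ω l) : p ∈ c.I := hp.1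

/-- Decomposition of `K ω` into depth-`l` descendants. -/
lemma Ctx.K_decomp (ω : ℤ × ℕ) (hω : ω ∈ c.I) (l : ℕ) :
    c.K ω = ⋃ p ∈ c.Dset ω l, c.K p := by
  apply le_antisymm
  · -- ⊆
    have hclosed : IsClosed (⋃ p ∈ c.Dset ω l, c.K p) :=
      Set.Finite.isClosed_biUnion (c.Dset_finite ω l) (fun p _ => c.K_closed p)
    rw [c.K_eq]
    apply closure_minimal ?_ hclosed
    intro y hy
    rcases Set.mem_iUnion.1 hy with ⟨i, hyi⟩
    rcases hyi with ⟨q, ⟨hqI, hqdesc⟩, rfl⟩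
    by_cases hil : l ≤ i
    · -- q is deep enough: find its ancestor at depth l below ω
      set p := c.pi^[i - l] q with hp
      have hpI : p ∈ c.I := (c.lvl (i - l) q hqI).1
      have hpdesc : c.pi^[l] p = ω := by
        rw [hp, ← Function.iterate_add_apply]
        have : l + (i - l) = i := by omega
        rw [this, hqdesc]
      refine Set.mem_iUnion₂.2 ⟨p, ⟨hpI, hpdesc⟩, ?_⟩
      exact subset_closure (c.mem_S q p hqI (i - l) rfl)
    · -- q is shallow: approximate x q by deep descendants
      push_neg at hil
      refine Set.mem_iUnion₂.2 ?_
      -- x q is in the closure of the union of the S p for p ∈ Dset ω l;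
      -- since that union of K's is closed, use approximation directly
      have hmem : c.x q ∈ closure (⋃ p ∈ c.Dset ω l, c.S p) := by
        rw [Metric.mem_closure_iff]
        intro ε hε
        have hu : dist (c.x q) (c.x q) + c.s * c.r ^ q.1 < c.α₂ * c.r ^ q.1 := by
          rw [dist_self]
          have := c.rk_pos q.1
          nlinarith [c.hs_lt_α₂]
        obtain ⟨q', hq'I, j, hj1, hjL, hq'desc, hq'd, -⟩ :=
          c.approx_desc q hqI (c.x q) hu ε hε (l - i)
        set p := c.pi^[i + j - l] q' with hp
        have hpI : p ∈ c.I := (c.lvl (i + j - l) q' hq'I).1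
        have hpdesc : c.pi^[l] p = ω := by
          rw [hp, ← Function.iterate_add_apply]
          have : l + (i + j - l) = i + j := by omega
          rw [this, Function.iterate_add_apply, hq'desc, hqdesc]
        refine ⟨c.x q', Set.mem_iUnion₂.2 ⟨p, ⟨hpI, hpdesc⟩, c.mem_S q' p hq'I (i + j - l) rfl⟩, hq'd⟩
      have hsub : closure (⋃ p ∈ c.Dset ω l, c.S p) ⊆ ⋃ p ∈ c.Dset ω l, c.K p := by
        apply closure_minimal ?_ (Set.Finite.isClosed_biUnion (c.Dset_finite ω l)
          (fun p _ => c.K_closed p))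
        intro z hz
        rcases Set.mem_iUnion₂.1 hz with ⟨p, hpD, hzp⟩
        exact Set.mem_iUnion₂.2 ⟨p, hpD, subset_closure hzp⟩
      rcases Set.mem_iUnion₂.1 (hsub hmem) with ⟨p, hpD, hmp⟩
      exact ⟨p, hpD, hmp⟩
  · -- ⊇
    intro y hy
    rcases Set.mem_iUnion₂.1 hy with ⟨p, hpD, hyp⟩
    exact c.K_mono p ω l hpD.2 hyp

/-- `S ω ⊆ interior (K ω)`. -/
lemma Ctx.S_subset_interior (ω : ℤ × ℕ) (hω : ω ∈ c.I) :
    c.S ω ⊆ interior (c.K ω) := by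
  intro y hy
  rcases Set.mem_iUnion.1 hy with ⟨i, hyi⟩
  rcases hyi with ⟨q, ⟨hqI, hqdesc⟩, rfl⟩
  have hball : Metric.ball (c.x q) (c.δ * c.r ^ q.1) ⊆ c.K ω :=
    subset_trans (c.ball_subset_K q hqI) (c.K_mono q ω i hqdesc)
  have hmem : c.x q ∈ Metric.ball (c.x q) (c.δ * c.r ^ q.1) := by
    rw [Metric.mem_ball, dist_self]
    exact mul_pos c.hδ (c.rk_pos q.1)
  exact interior_maximal hball Metric.isOpen_ball hmem

/-- (P1) `K ω` is regular closed. -/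
lemma Ctx.K_regular (ω : ℤ × ℕ) (hω : ω ∈ c.I) :
    closure (interior (c.K ω)) = c.K ω := by
  apply le_antisymm (closure_minimal interior_subset (c.K_closed ω))
  conv_lhs => rw [c.K_eq]
  exact closure_mono (c.S_subset_interior ω hω)

/-- (P2) the interior of `K ω` is disjoint from every other same-level `K`. -/
lemma Ctx.interior_K_disjoint (ω lam : ℤ × ℕ) (hω : ω ∈ c.I) (hlam : lam ∈ c.I)
    (hlev : lam.1 = ω.1) (hne : lam ≠ ω) :
    interior (c.K ω) ∩ c.K lam = ∅ := by
  by_contra hne'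
  obtain ⟨y, hyint, hylam⟩ := Set.nonempty_iff_ne_empty.2 hne'
  obtain ⟨ε, hεpos, hball⟩ := Metric.isOpen_iff.1 isOpen_interior y hyint
  have hballK : Metric.ball y ε ⊆ c.K ω := subset_trans hball interior_subset
  obtain ⟨l, -, hl⟩ := c.exists_small c.t c.ht ω.1 ε hεpos 0
  -- find descendant p of lam at depth l with y ∈ K p
  rw [c.K_decomp lam hlam l] at hylam
  rcases Set.mem_iUnion₂.1 hylam with ⟨p, hpD, hyp⟩
  have hpdist : dist y (c.x p) ≤ c.t * c.r ^ p.1 := by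
    have := c.K_diam p (c.Dset_mem_I lam l p hpD) hyp
    rwa [Metric.mem_closedBall] at this
  have hplev : p.1 = ω.1 + l := by rw [c.Dset_level lam l p hpD, hlev]
  have hxpK : c.x p ∈ c.K ω := by
    apply hballK
    rw [Metric.mem_ball, dist_comm]
    rw [hplev] at hpdist
    exact lt_of_le_of_lt hpdist hl
  rw [c.K_decomp ω hω l] at hxpK
  rcases Set.mem_iUnion₂.1 hxpK with ⟨p', hp'D, hxp'⟩
  have hpp' : p ≠ p' := by
    intro h
    apply hne
    rw [← hpD.2, h]
    exact hp'D.2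
  have := c.ball_disjoint_K p p' (c.Dset_mem_I lam l p hpD) (c.Dset_mem_I ω l p' hp'D)
    (by rw [c.Dset_level ω l p' hp'D, c.Dset_level lam l p hpD, hlev]) (Ne.symm hpp')
    (c.x p) (by rw [dist_self]; exact mul_pos c.hδ (c.rk_pos p.1))
  exact this hxp'


/-- (L4) If the `α₃`-balls of two same-level points intersect, their `K`-sets intersect. -/
lemma Ctx.K_touch (k : ℤ) (a b : ℤ × ℕ) (ha : a ∈ c.I) (hb : b ∈ c.I)
    (hal : a.1 = k) (hbl : b.1 = k)
    (hint : (Metric.ball (c.x a) (c.α₃ * c.r ^ k) ∩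
      Metric.ball (c.x b) (c.α₃ * c.r ^ k)).Nonempty) :
    (c.K a ∩ c.K b).Nonempty := by
  classical
  set Inv : ℕ → (ℤ × ℕ) × (ℤ × ℕ) → Prop := fun j p =>
    p.1 ∈ c.I ∧ p.2 ∈ c.I ∧ p.1.1 = k + j ∧ p.2.1 = k + j ∧
    (Metric.ball (c.x p.1) (c.α₃ * c.r ^ (k + (j:ℤ))) ∩
      Metric.ball (c.x p.2) (c.α₃ * c.r ^ (k + (j:ℤ)))).Nonempty ∧
    c.pi^[j] p.1 = a ∧ c.pi^[j] p.2 = b with hInvdef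
  have step : ∀ j p, Inv j p → ∃ p', Inv (j+1) p' ∧ c.pi p'.1 = p.1 ∧ c.pi p'.2 = p.2 := by
    intro j p hp
    obtain ⟨h1I, h2I, h1l, h2l, hb', hd1, hd2⟩ := hp
    have hp1 : p.1 = (k + (j:ℤ), p.1.2) := by rw [← h1l]
    have hp2 : p.2 = (k + (j:ℤ), p.2.2) := by rw [← h2l]
    obtain ⟨m₁, m₂, hm₁I, hm₂I, hmint, hπ₁, hπ₂⟩ :=
      c.T.T4 (k + (j:ℤ)) p.1.2 p.2.2 (by rw [← hp1]; exact h1I) (by rw [← hp2]; exact h2I)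
        (by rw [← hp1, ← hp2]; exact hb')
    refine ⟨((k + (j:ℤ) + 1, m₁), (k + (j:ℤ) + 1, m₂)), ?_, ?_, ?_⟩
    · refine ⟨hm₁I, hm₂I, ?_, ?_, ?_, ?_, ?_⟩
      · push_cast; ring
      · push_cast; ring
      · rw [show (k + (((j+1):ℕ):ℤ)) = k + (j:ℤ) + 1 from by push_cast; ring]
        exact hmint
      · rw [Function.iterate_succ_apply, hπ₁, ← hp1, hd1]
      · rw [Function.iterate_succ_apply, hπ₂, ← hp2, hd2]
    · rw [hπ₁, ← hp1]
    · rw [hπ₂, ← hp2]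
  set seq : ℕ → (ℤ × ℕ) × (ℤ × ℕ) := fun j =>
    Nat.rec (a, b) (fun j q => if h : Inv j q then (step j q h).choose else q) j with hseqdef
  have hInv0 : Inv 0 (a, b) := by
    refine ⟨ha, hb, by simpa using hal, by simpa using hbl, ?_, rfl, rfl⟩
    simpa [hal] using hint
  have hseq : ∀ j, Inv j (seq j) := by
    intro j
    induction j with
    | zero => exact hInv0
    | succ j ih =>
      have : seq (j+1) = if h : Inv j (seq j) then (step j (seq j) h).choose else seq j := rfl
      rw [this, dif_pos ih]
      exact (step j (seq j) ih).choose_spec.1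
  have hlink : ∀ j, c.pi ((seq (j+1)).1) = (seq j).1 ∧ c.pi ((seq (j+1)).2) = (seq j).2 := by
    intro j
    have : seq (j+1) = if h : Inv j (seq j) then (step j (seq j) h).choose else seq j := rfl
    rw [this, dif_pos (hseq j)]
    exact ⟨(step j (seq j) (hseq j)).choose_spec.2.1, (step j (seq j) (hseq j)).choose_spec.2.2⟩
  -- distances between consecutive terms
  have hstepdist : ∀ (j : ℕ) (sel : ((ℤ × ℕ) × (ℤ × ℕ)) → (ℤ × ℕ)),
      (∀ i, c.pi (sel (seq (i+1))) = sel (seq i)) →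
      (∀ i, (sel (seq i)).1 = k + i ∧ sel (seq i) ∈ c.I) →
      dist (c.x (sel (seq j))) (c.x (sel (seq (j+1)))) ≤ c.α₁ * c.r ^ k * c.r ^ j := by
    intro j sel hsel hlev
    have hform : sel (seq (j+1)) = (k + (j:ℤ) + 1, (sel (seq (j+1))).2) := by
      have h2 : (sel (seq (j+1))).1 = k + (j:ℤ) + 1 := by
        rw [(hlev (j+1)).1]; push_cast; ring
      exact Prod.ext h2 rfl
    have hT2 := c.T.T2 (k + (j:ℤ)) ((sel (seq (j+1))).2) (by rw [← hform]; exact (hlev (j+1)).2)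
    rw [← hform, hsel j] at hT2
    rw [dist_comm]
    have hfin : c.α₁ * c.r ^ (k + (j:ℤ)) = c.α₁ * c.r ^ k * c.r ^ j := by
      rw [c.rk_add, zpow_natCast]; ring
    rw [hfin] at hT2
    exact hT2.le
  have hcauchy1 : CauchySeq (fun j => c.x ((seq j).1)) := by
    apply cauchySeq_of_le_geometric c.r (c.α₁ * c.r ^ k) c.hr1
    intro j
    exact hstepdist j (fun p => p.1) (fun i => (hlink i).1)
      (fun i => ⟨(hseq i).2.2.1, (hseq i).1⟩)
  have hcauchy2 : CauchySeq (fun j => c.x ((seq j).2)) := by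
    apply cauchySeq_of_le_geometric c.r (c.α₁ * c.r ^ k) c.hr1
    intro j
    exact hstepdist j (fun p => p.2) (fun i => (hlink i).2)
      (fun i => ⟨(hseq i).2.2.2.1, (hseq i).2.1⟩)
  obtain ⟨qa, hqa⟩ := cauchySeq_tendsto_of_complete hcauchy1
  obtain ⟨qb, hqb⟩ := cauchySeq_tendsto_of_complete hcauchy2
  have hqaK : qa ∈ c.K a := by
    rw [c.K_eq]
    apply mem_closure_of_tendsto hqa
    filter_upwards with j
    exact c.mem_S _ a (hseq j).1 j (hseq j).2.2.2.2.2.1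
  have hqbK : qb ∈ c.K b := by
    rw [c.K_eq]
    apply mem_closure_of_tendsto hqb
    filter_upwards with j
    exact c.mem_S _ b (hseq j).2.1 j (hseq j).2.2.2.2.2.2
  have heq : qa = qb := by
    have hdist : Tendsto (fun j => dist (c.x ((seq j).1)) (c.x ((seq j).2))) atTop
        (nhds (dist qa qb)) := hqa.dist hqb
    have hbound : ∀ j, dist (c.x ((seq j).1)) (c.x ((seq j).2)) ≤ 2 * c.α₃ * c.r ^ k * c.r ^ j := by
      intro j
      obtain ⟨w, hw1, hw2⟩ := (hseq j).2.2.2.2.1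
      rw [Metric.mem_ball] at hw1 hw2
      have htri := dist_triangle (c.x ((seq j).1)) w (c.x ((seq j).2))
      rw [dist_comm (c.x ((seq j).1)) w] at htri
      rw [dist_comm w (c.x ((seq j).2))] at hw2
      have he : c.α₃ * c.r ^ (k + (j:ℤ)) = c.α₃ * c.r ^ k * c.r ^ j := by
        rw [c.rk_add, zpow_natCast]; ring
      rw [he] at hw1 hw2
      have hcomm : dist w (c.x ((seq j).2)) = dist (c.x ((seq j).2)) w := dist_comm _ _
      linarith
    have hzero : Tendsto (fun j : ℕ => 2 * c.α₃ * c.r ^ k * c.r ^ j) atTop (nhds 0) := by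
      have := (tendsto_pow_atTop_nhds_zero_of_lt_one (le_of_lt c.hr0) c.hr1).const_mul
        (2 * c.α₃ * c.r ^ k)
      simpa using this
    have h0 : dist qa qb ≤ 0 := le_of_tendsto_of_tendsto' hdist hzero hbound
    exact dist_le_zero.1 h0
  exact ⟨qa, hqaK, heq ▸ hqbK⟩


/-- The gap constant. -/
noncomputable def Ctx.gap : ℝ := c.α₃ - c.Cstar - c.s

lemma Ctx.hgap : 0 < c.gap := by
  have := c.hs_lt
  unfold Ctx.gap
  linarith

/-- The chaining constant `C₃`. -/
noncomputable def Ctx.C₃ : ℝ := c.gap / 3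

lemma Ctx.hC₃ : 0 < c.C₃ := by
  have := c.hgap
  unfold Ctx.C₃
  linarith

/-- (L8) Every point close to a net point `x b` lies in some cube `K a` touching `K b`. -/
lemma Ctx.L8 (k : ℤ) (b : ℤ × ℕ) (hb : b ∈ c.I) (hbl : b.1 = k) (u : X)
    (hu : dist u (c.x b) < (c.Cstar + c.C₃) * c.r ^ k) :
    ∃ a : ℤ × ℕ, a ∈ c.I ∧ a.1 = k ∧ u ∈ c.K a ∧ (c.K a ∩ c.K b).Nonempty := by
  classical
  have hrk := c.rk_pos k
  have hgap := c.hgap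
  -- choose the depth threshold L
  obtain ⟨L, hL1, hLsmall⟩ := c.exists_small c.Cstar c.hC0 0 (c.C₃) c.hC₃ 1
  have hLsmall' : c.Cstar * c.r ^ (L:ℤ) < c.C₃ := by
    rwa [zero_add] at hLsmall
  -- covering points of u at each depth
  have hcov : ∀ l : ℕ, ∃ q : ℤ × ℕ, q ∈ c.I ∧ q.1 = k + l ∧
      dist u (c.x q) < c.Cstar * c.r ^ (k + (l:ℤ)) := by
    intro l
    obtain ⟨n, hnI, hnd⟩ := c.net.covering u (k + l)
    exact ⟨(k + (l:ℤ), n), hnI, rfl, hnd⟩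
  choose q hqI hqlev hqd using hcov
  -- ancestors at level k
  obtain ⟨A, hAeq⟩ : ∃ A : ℕ → ℤ × ℕ, ∀ l, A l = c.pi^[l] (q l) := ⟨_, fun l => rfl⟩
  have hAI : ∀ l, A l ∈ c.I := fun l => (hAeq l) ▸ (c.lvl l (q l) (hqI l)).1
  have hAlev : ∀ l, (A l).1 = k := by
    intro l
    have h := (c.lvl l (q l) (hqI l)).2
    rw [hqlev l] at h
    rw [hAeq l, h]
    omega
  have hAform : ∀ l, A l = (k, (A l).2) := fun l => Prod.ext (hAlev l) rfl
  have hrl_le : ∀ l : ℕ, c.r ^ (l:ℤ) ≤ 1 := by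
    intro l
    rw [zpow_natCast]
    exact pow_le_one₀ (le_of_lt c.hr0) (le_of_lt c.hr1)
  have hAdist : ∀ l, dist (c.x (A l)) u ≤ (c.t + c.Cstar) * c.r ^ k := by
    intro l
    have hch := c.chain l (q l) (hqI l)
    rw [← hAeq l] at hch
    have hche : (q l).1 - (l:ℤ) = k := by rw [hqlev l]; ring
    rw [hche] at hch
    have h1 := hqd l
    have h2 : c.Cstar * c.r ^ (k + (l:ℤ)) ≤ c.Cstar * c.r ^ k := by
      rw [c.rk_add]
      exact mul_le_mul_of_nonneg_left
        (mul_le_of_le_one_right (le_of_lt hrk) (hrl_le l)) (le_of_lt c.hC0)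
    calc dist (c.x (A l)) u ≤ dist (c.x (A l)) (c.x (q l)) + dist (c.x (q l)) u :=
          dist_triangle _ _ _
      _ ≤ c.t * c.r ^ k + c.Cstar * c.r ^ k := by
          rw [dist_comm (c.x (A l)) (c.x (q l)), dist_comm (c.x (q l)) u]
          exact add_le_add hch (le_of_lt (lt_of_lt_of_le h1 h2))
      _ = (c.t + c.Cstar) * c.r ^ k := by ring
  -- pigeonhole: some ancestor value occurs infinitely often
  have hVfin := c.finite_in_ball k u ((c.t + c.Cstar) * c.r ^ k)
  have hinf : ∃ nfin : ℕ, (k, nfin) ∈ c.I ∧ {l : ℕ | A l = (k, nfin)}.Infinite := by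
    by_contra hcon
    push_neg at hcon
    have hcover : (Set.univ : Set ℕ) ⊆ ⋃ n ∈ {n : ℕ | (k, n) ∈ c.I ∧
        dist (c.x (k, n)) u ≤ (c.t + c.Cstar) * c.r ^ k}, {l : ℕ | A l = (k, n)} := by
      intro l _
      refine Set.mem_iUnion₂.2 ⟨(A l).2, ⟨?_, ?_⟩, ?_⟩
      · rw [← hAform l]; exact hAI l
      · rw [← hAform l]; exact hAdist l
      · exact hAform l
    have : (Set.univ : Set ℕ).Finite := by
      apply Set.Finite.subset (Set.Finite.biUnion hVfin (fun n hn => ?_)) hcover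
      exact hcon n hn.1
    exact Set.infinite_univ this
  obtain ⟨nfin, hnfinI, hnfininf⟩ := hinf
  set a : ℤ × ℕ := (k, nfin) with ha
  have haI : a ∈ c.I := hnfinI
  -- u ∈ K a
  have huKa : u ∈ c.K a := by
    rw [c.K_eq, Metric.mem_closure_iff]
    intro ε hε
    obtain ⟨l, -, hlsm⟩ := c.exists_small c.Cstar c.hC0 k ε hε 0
    obtain ⟨l', hl'mem, hl'gt⟩ := hnfininf.exists_gt l
    have hdesc : c.pi^[l'] (q l') = a := by rw [← hAeq l']; exact hl'mem
    refine ⟨c.x (q l'), c.mem_S (q l') a (hqI l') l' hdesc, ?_⟩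
    have h1 := hqd l'
    have h2 : c.Cstar * c.r ^ (k + (l':ℤ)) ≤ c.Cstar * c.r ^ (k + (l:ℤ)) := by
      rw [c.rk_add, c.rk_add, zpow_natCast, zpow_natCast]
      have h3 := pow_le_pow_of_le_one (le_of_lt c.hr0) (le_of_lt c.hr1) (le_of_lt hl'gt)
      exact mul_le_mul_of_nonneg_left (mul_le_mul_of_nonneg_left h3 (le_of_lt hrk))
        (le_of_lt c.hC0)
    linarith
  -- pick a deep index in the fiber
  obtain ⟨l₀, hl₀mem, hl₀gt⟩ := hnfininf.exists_gt L
  have hl₀1 : 1 ≤ l₀ := le_trans hL1 (le_of_lt hl₀gt)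
  -- the level-(k+1) ancestor
  set p1 : ℤ × ℕ := c.pi^[l₀ - 1] (q l₀) with hp1
  have hp1I : p1 ∈ c.I := (c.lvl (l₀ - 1) (q l₀) (hqI l₀)).1
  have hp1lev : p1.1 = k + 1 := by
    have := (c.lvl (l₀ - 1) (q l₀) (hqI l₀)).2
    rw [hqlev l₀] at this
    rw [hp1, this]
    push_cast
    omega
  have hπp1 : c.pi p1 = a := by
    have hthis : c.pi^[l₀] (q l₀) = a := by rw [← hAeq l₀]; exact hl₀mem
    have h2 : c.pi^[(l₀ - 1) + 1] (q l₀) = a := by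
      rw [show (l₀ - 1) + 1 = l₀ from by omega]
      exact hthis
    rw [Function.iterate_succ_apply'] at h2
    rw [hp1]
    exact h2
  -- distance from u to x p1
  have hup1 : dist u (c.x p1) ≤ (c.C₃ + c.s) * c.r ^ k := by
    have hch := c.chain (l₀ - 1) (q l₀) (hqI l₀)
    rw [← hp1] at hch
    have hche : (q l₀).1 - ((l₀ - 1 : ℕ):ℤ) = k + 1 := by
      rw [hqlev l₀]
      push_cast
      omega
    rw [hche] at hch
    have htr1 : c.t * c.r ^ (k + 1) ≤ c.s * c.r ^ k := by
      rw [c.rk_add, zpow_one, c.hs_eq]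
      have h := mul_le_mul_of_nonneg_left c.hrr₀ (le_of_lt (mul_pos c.ht (c.rk_pos k)))
      nlinarith [h]
    have h1 := hqd l₀
    have h2 : c.Cstar * c.r ^ (k + (l₀:ℤ)) ≤ c.C₃ * c.r ^ k := by
      rw [c.rk_add]
      have hmono : c.r ^ ((l₀:ℕ):ℤ) ≤ c.r ^ ((L:ℕ):ℤ) := by
        rw [zpow_natCast, zpow_natCast]
        exact pow_le_pow_of_le_one (le_of_lt c.hr0) (le_of_lt c.hr1) (le_of_lt hl₀gt)
      have hx1 : c.Cstar * c.r ^ ((l₀:ℕ):ℤ) ≤ c.Cstar * c.r ^ ((L:ℕ):ℤ) :=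
        mul_le_mul_of_nonneg_left hmono (le_of_lt c.hC0)
      calc c.Cstar * (c.r ^ k * c.r ^ ((l₀:ℕ):ℤ))
          = c.r ^ k * (c.Cstar * c.r ^ ((l₀:ℕ):ℤ)) := by ring
        _ ≤ c.r ^ k * c.C₃ :=
            mul_le_mul_of_nonneg_left (le_trans hx1 (le_of_lt hLsmall')) (le_of_lt hrk)
        _ = c.C₃ * c.r ^ k := by ring
    calc dist u (c.x p1) ≤ dist u (c.x (q l₀)) + dist (c.x (q l₀)) (c.x p1) :=
          dist_triangle _ _ _
      _ ≤ c.C₃ * c.r ^ k + c.s * c.r ^ k := by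
          exact add_le_add (le_of_lt (lt_of_lt_of_le h1 h2)) (le_trans hch htr1)
      _ = (c.C₃ + c.s) * c.r ^ k := by ring
  -- case split on whether p1 is far from its parent
  have hgapC₃ : c.Cstar + c.C₃ + (c.C₃ + c.s) < c.α₃ := by
    unfold Ctx.C₃ Ctx.gap at *
    linarith
  by_cases hfar : c.Cstar * c.r ^ k ≤ dist (c.x p1) (c.x (c.pi p1))
  · -- far case: use T5
    have hp1form : p1 = (k + 1, p1.2) := Prod.ext hp1lev rfl
    have hbform : b = (k, b.2) := Prod.ext hbl rfl
    have hd5 : dist (c.x p1) (c.x b) < c.α₃ * c.r ^ k := by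
      have htri : dist (c.x p1) (c.x b) ≤ dist u (c.x p1) + dist u (c.x b) := by
        rw [dist_comm u (c.x p1)]
        exact dist_triangle _ _ _
      nlinarith
    obtain ⟨m₂, m₃, hm₂I, hm₃I, hmint, hπ₂, hπ₃⟩ := c.T.T5 k p1.2 b.2
      (by rw [← hp1form]; exact hp1I) (by rw [← hbform]; exact hb)
      (by rw [← hp1form]; exact hfar) (by rw [← hp1form, ← hbform]; exact hd5)
    rw [← hp1form] at hπ₂
    rw [← hbform] at hπ₃
    have htouch := c.K_touch (k + 1) (k+1, m₂) (k+1, m₃) hm₂I hm₃I rfl rfl hmint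
    obtain ⟨w, hw₂, hw₃⟩ := htouch
    refine ⟨a, haI, rfl, huKa, w, ?_, ?_⟩
    · exact c.K_mono (k+1, m₂) a 1 (by rw [Function.iterate_one, hπ₂, hπp1]) hw₂
    · exact c.K_mono (k+1, m₃) b 1 (by rw [Function.iterate_one, hπ₃]) hw₃
  · -- near case: both balls contain u
    push_neg at hfar
    rw [hπp1] at hfar
    have hua : dist u (c.x a) < c.α₃ * c.r ^ k := by
      have htri : dist u (c.x a) ≤ dist u (c.x p1) + dist (c.x p1) (c.x a) :=
        dist_triangle _ _ _
      nlinarith [mul_lt_mul_of_pos_right hgapC₃ hrk, mul_pos c.hC₃ hrk, mul_pos c.hC0 hrk]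
    have hub : dist u (c.x b) < c.α₃ * c.r ^ k := by
      nlinarith [mul_lt_mul_of_pos_right hgapC₃ hrk, mul_pos c.hC₃ hrk, mul_pos c.hs hrk]
    have htouch := c.K_touch k a b haI hb rfl hbl
      ⟨u, Metric.mem_ball.2 hua, Metric.mem_ball.2 hub⟩
    exact ⟨a, haI, rfl, huKa, htouch⟩


open Classical in
/-- Auxiliary order relation with fuel. -/
noncomputable def ordA (π : ℤ × ℕ → ℤ × ℕ) : ℕ → ℤ × ℕ → ℤ × ℕ → Prop
  | 0, ω, lam => ω.2 < lam.2
  | (f+1), ω, lam => if π ω = π lam then ω.2 < lam.2 else ordA π f (π ω) (π lam)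

lemma ordA_asymm (π : ℤ × ℕ → ℤ × ℕ) : ∀ (f : ℕ) (ω lam : ℤ × ℕ),
    ordA π f ω lam → ordA π f lam ω → False := by
  intro f
  induction f with
  | zero =>
    intro ω lam h1 h2
    simp only [ordA] at h1 h2
    omega
  | succ f ih =>
    intro ω lam h1 h2
    simp only [ordA] at h1 h2
    by_cases h : π ω = π lam
    · rw [if_pos h] at h1
      rw [if_pos h.symm] at h2
      omega
    · rw [if_neg h] at h1
      rw [if_neg (fun he => h he.symm)] at h2
      exact ih _ _ h1 h2

lemma ordA_trans (π : ℤ × ℕ → ℤ × ℕ) : ∀ (f : ℕ) (ω lam μ : ℤ × ℕ),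
    ordA π f ω lam → ordA π f lam μ → ordA π f ω μ := by
  intro f
  induction f with
  | zero =>
    intro ω lam μ h1 h2
    simp only [ordA] at *
    omega
  | succ f ih =>
    intro ω lam μ h1 h2
    simp only [ordA] at *
    by_cases hab : π ω = π lam <;> by_cases hbc : π lam = π μ
    · rw [if_pos hab] at h1
      rw [if_pos hbc] at h2
      rw [if_pos (hab.trans hbc)]
      omega
    · rw [if_pos hab] at h1
      rw [if_neg hbc] at h2
      rw [if_neg (fun h => hbc (hab.symm.trans h))]
      rw [hab]
      exact h2
    · rw [if_neg hab] at h1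
      rw [if_pos hbc] at h2
      rw [if_neg (fun h => hab (h.trans hbc.symm))]
      rw [← hbc]
      exact h1
    · rw [if_neg hab] at h1
      rw [if_neg hbc] at h2
      by_cases hac : π ω = π μ
      · exfalso
        rw [← hac] at h2
        exact ordA_asymm π f _ _ h1 h2
      · rw [if_neg hac]
        exact ih _ _ _ h1 h2

lemma Ctx.ordA_trichot : ∀ (f : ℕ) (ω lam : ℤ × ℕ), ω ∈ c.I → lam ∈ c.I →
    ω.1 = lam.1 → ω ≠ lam → ordA c.pi f ω lam ∨ ordA c.pi f lam ω := by
  intro f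
  induction f with
  | zero =>
    intro ω lam hω hlam hlev hne
    have : ω.2 ≠ lam.2 := by
      intro h
      exact hne (Prod.ext hlev h)
    simp only [ordA]
    omega
  | succ f ih =>
    intro ω lam hω hlam hlev hne
    simp only [ordA]
    by_cases h : c.pi ω = c.pi lam
    · rw [if_pos h, if_pos h.symm]
      have : ω.2 ≠ lam.2 := by
        intro h2
        exact hne (Prod.ext hlev h2)
      omega
    · rw [if_neg h, if_neg (fun he => h he.symm)]
      have hπω := c.lvl 1 ω hω
      have hπlam := c.lvl 1 lam hlam
      rw [Function.iterate_one] at hπω hπlam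
      exact ih (c.pi ω) (c.pi lam) hπω.1 hπlam.1 (by rw [hπω.2, hπlam.2, hlev]) h

/-- The ultrafilter at `-∞`. -/
noncomputable def Ctx.U (_c : Ctx X) : Ultrafilter ℤ := Ultrafilter.of Filter.atBot

lemma Ctx.U_Iic (k : ℤ) : Set.Iic k ∈ c.U :=
  Ultrafilter.of_le Filter.atBot (Filter.Iic_mem_atBot k)

/-- The global compatible order. -/
noncomputable def Ctx.olt (ω lam : ℤ × ℕ) : Prop :=
  {M : ℤ | ordA c.pi ((ω.1 - M).toNat) ω lam} ∈ c.U

lemma Ctx.olt_asymm (ω lam : ℤ × ℕ) (hlev : ω.1 = lam.1) :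
    c.olt ω lam → c.olt lam ω → False := by
  intro h1 h2
  have h3 := (c.U.inter_mem h1 h2 : _ ∈ c.U)
  obtain ⟨M, hM1, hM2⟩ := Ultrafilter.nonempty_of_mem h3
  rw [Set.mem_setOf_eq] at hM1 hM2
  rw [hlev] at hM1
  exact ordA_asymm c.pi _ _ _ hM1 hM2

lemma Ctx.olt_trans (ω lam μ : ℤ × ℕ) (h1lev : ω.1 = lam.1) (h2lev : lam.1 = μ.1) :
    c.olt ω lam → c.olt lam μ → c.olt ω μ := by
  intro h1 h2
  apply c.U.toFilter.mem_of_superset (c.U.inter_mem h1 h2)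
  intro M hM
  rw [Set.mem_setOf_eq]
  rw [Set.mem_inter_iff, Set.mem_setOf_eq, Set.mem_setOf_eq] at hM
  rw [h1lev] at hM
  rw [h1lev, h2lev]
  rw [h2lev] at hM
  exact ordA_trans c.pi _ _ _ _ hM.1 hM.2

lemma Ctx.olt_trichot (ω lam : ℤ × ℕ) (hω : ω ∈ c.I) (hlam : lam ∈ c.I)
    (hlev : ω.1 = lam.1) (hne : ω ≠ lam) : c.olt ω lam ∨ c.olt lam ω := by
  have huniv : {M : ℤ | ordA c.pi ((ω.1 - M).toNat) ω lam} ∪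
      {M : ℤ | ordA c.pi ((lam.1 - M).toNat) lam ω} = Set.univ := by
    ext M
    simp only [Set.mem_union, Set.mem_setOf_eq, Set.mem_univ, iff_true]
    rw [← hlev]
    exact c.ordA_trichot ((ω.1 - M).toNat) ω lam hω hlam hlev hne
  have := c.U.toFilter.univ_mem
  rw [← huniv] at this
  exact (Ultrafilter.union_mem_iff.1 this)

lemma Ctx.olt_compat (ω lam : ℤ × ℕ) (hω : ω ∈ c.I) (hlam : lam ∈ c.I)
    (hlev : ω.1 = lam.1) (hπne : c.pi ω ≠ c.pi lam)
    (h : c.olt (c.pi ω) (c.pi lam)) : c.olt ω lam := by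
  have hπlev := (c.lvl 1 ω hω).2
  rw [Function.iterate_one] at hπlev
  apply c.U.toFilter.mem_of_superset (c.U.inter_mem h (c.U_Iic (ω.1 - 1)))
  rintro M ⟨hM1, hM2⟩
  rw [Set.mem_setOf_eq] at hM1 ⊢
  rw [Set.mem_Iic] at hM2
  rw [hπlev] at hM1
  have htn : (ω.1 - M).toNat = (ω.1 - 1 - M).toNat + 1 := by omega
  rw [htn]
  simp only [ordA]
  rw [if_neg hπne]
  exact hM1

/-- Converse compatibility. -/
lemma Ctx.olt_compat' (ω lam : ℤ × ℕ) (hω : ω ∈ c.I) (hlam : lam ∈ c.I)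
    (hlev : ω.1 = lam.1) (hπne : c.pi ω ≠ c.pi lam)
    (h : c.olt ω lam) : c.olt (c.pi ω) (c.pi lam) := by
  have hπω := c.lvl 1 ω hω
  have hπlam := c.lvl 1 lam hlam
  rw [Function.iterate_one] at hπω hπlam
  rcases c.olt_trichot (c.pi ω) (c.pi lam) hπω.1 hπlam.1
    (by rw [hπω.2, hπlam.2, hlev]) hπne with h1 | h1
  · exact h1
  · exfalso
    have := c.olt_compat lam ω hlam hω hlev.symm (fun he => hπne he.symm) h1
    exact c.olt_asymm ω lam hlev h this

/-- Minimum of a finite set of labels. -/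
lemma Ctx.exists_olt_min_finset (k : ℤ) : ∀ (t : Finset ℕ), t.Nonempty →
    (∀ n ∈ t, (k, n) ∈ c.I) →
    ∃ n ∈ t, ∀ m ∈ t, m ≠ n → c.olt (k, n) (k, m) := by
  intro t
  induction t using Finset.induction_on with
  | empty => intro h; exact absurd h (by simp)
  | @insert a t ha ih =>
    intro _ hsub
    rcases Finset.eq_empty_or_nonempty t with rfl | htne
    · refine ⟨a, Finset.mem_insert_self a _, ?_⟩
      intro m hm hma
      rcases Finset.mem_insert.1 hm with rfl | hm'
      · exact absurd rfl hma
      · exact absurd hm' (Finset.notMem_empty m)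
    · obtain ⟨n₀, hn₀t, hn₀min⟩ := ih htne (fun n hn => hsub n (Finset.mem_insert_of_mem hn))
      have hane : a ≠ n₀ := fun h => ha (h ▸ hn₀t)
      have haI : (k, a) ∈ c.I := hsub a (Finset.mem_insert_self a t)
      have hn₀I : (k, n₀) ∈ c.I := hsub n₀ (Finset.mem_insert_of_mem hn₀t)
      rcases c.olt_trichot (k, a) (k, n₀) haI hn₀I rfl
        (fun h => hane (congrArg Prod.snd h)) with h | h
      · refine ⟨a, Finset.mem_insert_self a _, ?_⟩
        intro m hm hma
        rcases Finset.mem_insert.1 hm with rfl | hm'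
        · exact absurd rfl hma
        · by_cases hmn₀ : m = n₀
          · subst hmn₀; exact h
          · exact c.olt_trans (k, a) (k, n₀) (k, m) rfl rfl h (hn₀min m hm' hmn₀)
      · refine ⟨n₀, Finset.mem_insert_of_mem hn₀t, ?_⟩
        intro m hm hmn₀
        rcases Finset.mem_insert.1 hm with rfl | hm'
        · exact h
        · exact hn₀min m hm' hmn₀


/-- The set of labels of level-`k` cubes containing `y`. -/
def Ctx.F (k : ℤ) (y : X) : Set ℕ := {n | (k, n) ∈ c.I ∧ y ∈ c.K (k, n)}

lemma Ctx.F_finite (k : ℤ) (y : X) : (c.F k y).Finite := by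
  apply Set.Finite.subset (c.finite_in_ball k y (c.t * c.r ^ k))
  intro n hn
  have := c.K_diam (k, n) hn.1 hn.2
  rw [Metric.mem_closedBall] at this
  exact ⟨hn.1, by rw [dist_comm]; exact this⟩

lemma Ctx.F_nonempty (k : ℤ) (y : X) : (c.F k y).Nonempty := by
  obtain ⟨n, hnI, hnd⟩ := c.net.covering y k
  have hd : dist y (c.x (k, n)) < (c.Cstar + c.C₃) * c.r ^ k := by
    have := mul_pos c.hC₃ (c.rk_pos k)
    nlinarith
  obtain ⟨a, haI, halev, hyKa, -⟩ := c.L8 k (k, n) hnI rfl y hd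
  have haform : a = (k, a.2) := Prod.ext halev rfl
  exact ⟨a.2, by rw [← haform]; exact haI, by rw [← haform]; exact hyKa⟩

lemma Ctx.exists_N (k : ℤ) (y : X) :
    ∃ n, n ∈ c.F k y ∧ ∀ m ∈ c.F k y, m ≠ n → c.olt (k, n) (k, m) := by
  have hfin := c.F_finite k y
  obtain ⟨n, hn, hmin⟩ := c.exists_olt_min_finset k hfin.toFinset
    (by rw [Set.Finite.toFinset_nonempty]; exact c.F_nonempty k y)
    (fun n hn => ((hfin.mem_toFinset).1 hn).1)
  refine ⟨n, (hfin.mem_toFinset).1 hn, fun m hm hmn => ?_⟩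
  exact hmin m ((hfin.mem_toFinset).2 hm) hmn

/-- The label selection. -/
noncomputable def Ctx.N (k : ℤ) (y : X) : ℕ := (c.exists_N k y).choose

lemma Ctx.N_mem (k : ℤ) (y : X) : c.N k y ∈ c.F k y := (c.exists_N k y).choose_spec.1

lemma Ctx.N_min (k : ℤ) (y : X) :
    ∀ m ∈ c.F k y, m ≠ c.N k y → c.olt (k, c.N k y) (k, m) :=
  (c.exists_N k y).choose_spec.2

lemma Ctx.N_I (k : ℤ) (y : X) : (k, c.N k y) ∈ c.I := (c.N_mem k y).1

lemma Ctx.mem_K_N (k : ℤ) (y : X) : y ∈ c.K (k, c.N k y) := (c.N_mem k y).2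

lemma Ctx.N_unique (k : ℤ) (y : X) (n : ℕ) (hn : n ∈ c.F k y)
    (hmin : ∀ m ∈ c.F k y, m ≠ n → c.olt (k, n) (k, m)) : c.N k y = n := by
  by_contra h
  have h1 := c.N_min k y n hn (fun he => h he.symm)
  have h2 := hmin (c.N k y) (c.N_mem k y) h
  exact c.olt_asymm (k, c.N k y) (k, n) rfl h1 h2

/-- A net point of a descendant of `(k,n)` is in no other same-level `K`. -/
lemma Ctx.x_notin_other_K (k : ℤ) (n : ℕ) (h : (k, n) ∈ c.I) (p : ℤ × ℕ) (hp : p ∈ c.I)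
    (i : ℕ) (hi : c.pi^[i] p = (k, n)) (m : ℕ) (hm : (k, m) ∈ c.I) (hmn : m ≠ n) :
    c.x p ∉ c.K (k, m) := by
  intro hmem
  have hplev : p.1 = k + i := by
    have := (c.lvl i p hp).2
    rw [hi] at this
    simp at this
    omega
  rw [c.K_decomp (k, m) hm i] at hmem
  rcases Set.mem_iUnion₂.1 hmem with ⟨p', hp'D, hxp'⟩
  have hpp' : p' ≠ p := by
    intro he
    subst he
    exact hmn (congrArg Prod.snd (hp'D.2.symm.trans hi))
  exact c.ball_disjoint_K p p' hp (c.Dset_mem_I _ _ _ hp'D)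
    (by rw [c.Dset_level (k, m) i p' hp'D]; simpa using hplev.symm)
    hpp' (c.x p) (by rw [dist_self]; exact mul_pos c.hδ (c.rk_pos p.1)) hxp'

/-- The cube associated to a label. -/
def Ctx.Q (ω : ℤ × ℕ) : Set X := {y | c.N ω.1 y = ω.2}

lemma Ctx.Q_sub_K (k : ℤ) (n : ℕ) : c.Q (k, n) ⊆ c.K (k, n) := by
  intro y hy
  have := c.mem_K_N k y
  rwa [show c.N k y = n from hy] at this

/-- Cube representation: `Q = K` minus the earlier `K`s. -/
lemma Ctx.Q_eq (k : ℤ) (n : ℕ) (h : (k, n) ∈ c.I) :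
    c.Q (k, n) = c.K (k, n) \
      ⋃ (m : {m : ℕ // (k, m) ∈ c.I ∧ c.olt (k, m) (k, n)}), c.K (k, m.1) := by
  ext y
  constructor
  · intro hy
    refine ⟨c.Q_sub_K k n hy, ?_⟩
    intro hmem
    rcases Set.mem_iUnion.1 hmem with ⟨⟨m, hmI, hmolt⟩, hyK⟩
    have hmn : m ≠ n := by
      intro he
      subst he
      exact c.olt_asymm (k, m) (k, m) rfl hmolt hmolt
    have hmF : m ∈ c.F k y := ⟨hmI, hyK⟩
    have hNn : c.N k y = n := hy
    have := c.N_min k y m hmF (by rw [hNn]; exact hmn)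
    rw [hNn] at this
    exact c.olt_asymm (k, n) (k, m) rfl this hmolt
  · rintro ⟨hyK, hnot⟩
    have hnF : n ∈ c.F k y := ⟨h, hyK⟩
    by_contra hne
    have hne' : n ≠ c.N k y := fun he => hne he.symm
    have holt := c.N_min k y n hnF hne'
    apply hnot
    exact Set.mem_iUnion.2 ⟨⟨c.N k y, c.N_I k y, holt⟩, c.mem_K_N k y⟩

/-- `S ⊆ Q`, hence `closure (Q ω) = K ω`. -/
lemma Ctx.closure_Q (k : ℤ) (n : ℕ) (h : (k, n) ∈ c.I) :
    closure (c.Q (k, n)) = c.K (k, n) := by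
  apply le_antisymm (closure_minimal (c.Q_sub_K k n) (c.K_closed _))
  have hSQ : c.S (k, n) ⊆ c.Q (k, n) := by
    intro z hz
    rcases Set.mem_iUnion.1 hz with ⟨i, hzi⟩
    rcases hzi with ⟨p, ⟨hpI, hpdesc⟩, rfl⟩
    show c.N k (c.x p) = n
    apply c.N_unique
    · exact ⟨h, subset_closure (c.mem_S p (k, n) hpI i hpdesc)⟩
    · intro m hm hmn
      exfalso
      exact c.x_notin_other_K k n h p hpI i hpdesc m hm.1 hmn hm.2
  calc c.K (k, n) = closure (c.S (k, n)) := c.K_eq _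
    _ ≤ closure (c.Q (k, n)) := closure_mono hSQ


/-- Compatibility of the selection with the parent map. -/
lemma Ctx.N_compat (k : ℤ) (y : X) :
    c.pi (k + 1, c.N (k + 1) y) = (k, c.N k y) := by
  set ms : ℤ × ℕ := (k + 1, c.N (k + 1) y) with hms
  have hmsI : ms ∈ c.I := c.N_I (k + 1) y
  have hπI : c.pi ms ∈ c.I ∧ (c.pi ms).1 = k := by
    have := c.lvl 1 ms hmsI
    rw [Function.iterate_one] at this
    refine ⟨this.1, ?_⟩
    rw [this.2]
    simp [hms]
  have hform : c.pi ms = (k, (c.pi ms).2) := Prod.ext hπI.2 rfl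
  have hyK : y ∈ c.K (c.pi ms) :=
    c.K_mono ms (c.pi ms) 1 (Function.iterate_one c.pi ▸ rfl) (c.mem_K_N (k + 1) y)
  have hmemF : (c.pi ms).2 ∈ c.F k y := by
    refine ⟨?_, ?_⟩
    · rw [← hform]; exact hπI.1
    · rw [← hform]; exact hyK
  have hmin : ∀ m ∈ c.F k y, m ≠ (c.pi ms).2 → c.olt (k, (c.pi ms).2) (k, m) := by
    intro n hn hne
    have hyKn := hn.2
    rw [c.K_decomp (k, n) hn.1 1] at hyKn
    rcases Set.mem_iUnion₂.1 hyKn with ⟨p, hpD, hyp⟩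
    have hplev : p.1 = k + 1 := by simpa using c.Dset_level (k, n) 1 p hpD
    have hpform : p = (k + 1, p.2) := Prod.ext hplev rfl
    have hpπ : c.pi p = (k, n) := by
      have := hpD.2
      rwa [Function.iterate_one] at this
    have hπne : c.pi ms ≠ c.pi p := by
      rw [hpπ]
      intro he
      exact hne (congrArg Prod.snd he).symm
    have hpF : p.2 ∈ c.F (k + 1) y := by
      refine ⟨?_, ?_⟩
      · rw [← hpform]; exact hpD.1
      · rw [← hpform]; exact hyp
    have hpne : p.2 ≠ c.N (k + 1) y := by
      intro he
      apply hπne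
      rw [show p = ms from by rw [hpform, he, hms]]
    have holtup : c.olt ms (k + 1, p.2) := c.N_min (k + 1) y p.2 hpF hpne
    have holtdown := c.olt_compat' ms (k + 1, p.2) hmsI
      (by rw [← hpform]; exact hpD.1) rfl (by rw [← hpform]; exact hπne)
      (by exact holtup)
    rw [← hpform, hpπ] at holtdown
    rw [hform] at holtdown
    exact holtdown
  have := c.N_unique k y (c.pi ms).2 hmemF hmin
  rw [hform, this]

/-- Iterated compatibility. -/
lemma Ctx.N_anc (d : ℕ) (k : ℤ) (y : X) :
    c.pi^[d] (k + d, c.N (k + d) y) = (k, c.N k y) := by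
  induction d generalizing k with
  | zero => simp
  | succ d ih =>
    have he : (k + ((d+1:ℕ):ℤ)) = (k + 1) + (d:ℤ) := by push_cast; ring
    rw [he]
    have h2 : c.pi^[d] ((k+1) + (d:ℤ), c.N ((k+1) + (d:ℤ)) y) = (k + 1, c.N (k+1) y) :=
      ih (k + 1)
    have h3 : c.pi^[d+1] ((k+1) + (d:ℤ), c.N ((k+1) + (d:ℤ)) y) =
        c.pi (c.pi^[d] ((k+1) + (d:ℤ), c.N ((k+1) + (d:ℤ)) y)) :=
      Function.iterate_succ_apply' c.pi d _
    rw [h3, h2]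
    exact c.N_compat k y

/-- (D1): the level-`k` cubes cover `X`. -/
lemma Ctx.Q_cover (k : ℤ) : (⋃ n ∈ {n : ℕ | (k, n) ∈ c.I}, c.Q (k, n)) = Set.univ := by
  ext y
  simp only [Set.mem_iUnion, Set.mem_univ, iff_true]
  exact ⟨c.N k y, c.N_I k y, rfl⟩

/-- (D3): nesting. -/
lemma Ctx.Q_nested (k l : ℤ) (hkl : k ≤ l) (m n : ℕ) :
    c.Q (l, m) ⊆ c.Q (k, n) ∨ c.Q (l, m) ∩ c.Q (k, n) = ∅ := by
  rcases Set.eq_empty_or_nonempty (c.Q (l, m) ∩ c.Q (k, n)) with he | ⟨y, hy1, hy2⟩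
  · exact Or.inr he
  · left
    set d : ℕ := (l - k).toNat with hd
    have hld : l = k + d := by omega
    intro z hz
    have hzm : c.N l z = m := hz
    have hym : c.N l y = m := hy1
    have hyn : c.N k y = n := hy2
    have hza := c.N_anc d k z
    have hya := c.N_anc d k y
    rw [← hld] at hza hya
    rw [hzm] at hza
    rw [hym] at hya
    show c.N k z = n
    have : (k, c.N k z) = (k, c.N k y) := by rw [← hza, ← hya]
    rw [← hyn]
    exact congrArg Prod.snd this

/-- (D4) inner ball. -/
lemma Ctx.ball_subset_Q (k : ℤ) (n : ℕ) (h : (k, n) ∈ c.I) :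
    Metric.ball (c.x (k, n)) (c.δ * c.r ^ k) ⊆ c.Q (k, n) := by
  rw [c.Q_eq k n h]
  intro u hu
  refine ⟨c.ball_subset_K (k, n) h hu, ?_⟩
  intro hmem
  rcases Set.mem_iUnion.1 hmem with ⟨⟨m, hmI, hmolt⟩, hyK⟩
  have hmn : (k, m) ≠ (k, n) := by
    intro he
    rw [he] at hmolt
    exact c.olt_asymm (k, n) (k, n) rfl hmolt hmolt
  rw [Metric.mem_ball] at hu
  exact c.ball_disjoint_K (k, n) (k, m) h hmI rfl hmn u hu hyK

/-- (D4) outer ball. -/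
lemma Ctx.Q_subset_ball (k : ℤ) (n : ℕ) (h : (k, n) ∈ c.I) :
    c.Q (k, n) ⊆ Metric.ball (c.x (k, n)) ((c.t + 1) * c.r ^ k) := by
  intro y hy
  have := c.K_diam (k, n) h (c.Q_sub_K k n hy)
  rw [Metric.mem_closedBall] at this
  rw [Metric.mem_ball]
  have := c.rk_pos k
  nlinarith

/-- Helper: a point of `closure A` inside an open set `V` is in `closure (A ∩ V)`. -/
lemma mem_closure_inter_open {Y : Type*} [TopologicalSpace Y] {A V : Set Y} {y : Y}
    (hV : IsOpen V) (hy : y ∈ closure A) (hyV : y ∈ V) : y ∈ closure (A ∩ V) := by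
  rw [_root_.mem_closure_iff] at hy ⊢
  intro O hO hyO
  obtain ⟨z, hz1, hz2⟩ := hy (O ∩ V) (hO.inter hV) ⟨hyO, hyV⟩
  exact ⟨z, hz1.1, hz2, hz1.2⟩

/-- The union of earlier same-level `K`s is closed. -/
lemma Ctx.earlier_closed (k : ℤ) (n : ℕ) :
    IsClosed (⋃ (m : {m : ℕ // (k, m) ∈ c.I ∧ c.olt (k, m) (k, n)}), c.K (k, m.1)) := by
  apply LocallyFinite.isClosed_iUnion
  · intro y
    refine ⟨Metric.ball y (c.r ^ k), Metric.ball_mem_nhds y (c.rk_pos k), ?_⟩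
    have hsub : {i : {m : ℕ // (k, m) ∈ c.I ∧ c.olt (k, m) (k, n)} |
        (c.K (k, i.1) ∩ Metric.ball y (c.r ^ k)).Nonempty} ⊆
        Subtype.val ⁻¹' {m : ℕ | (k, m) ∈ c.I ∧ dist (c.x (k, m)) y ≤ (c.t + 1) * c.r ^ k} := by
      rintro ⟨m, hmI, hmolt⟩ ⟨z, hz1, hz2⟩
      have h1 := c.K_diam (k, m) hmI hz1
      rw [Metric.mem_closedBall] at h1
      rw [Metric.mem_ball] at hz2
      refine ⟨hmI, ?_⟩
      calc dist (c.x (k, m)) y ≤ dist (c.x (k, m)) z + dist z y := dist_triangle _ _ _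
        _ ≤ c.t * c.r ^ k + c.r ^ k := by
            rw [dist_comm (c.x (k, m)) z]
            exact add_le_add h1 (le_of_lt hz2)
        _ = (c.t + 1) * c.r ^ k := by ring
    exact Set.Finite.subset
      (Set.Finite.preimage Set.injOn_subtype_val
        (c.finite_in_ball k y ((c.t + 1) * c.r ^ k))) hsub
  · intro i
    exact c.K_closed _

/-- (D2). -/
lemma Ctx.Q_regular (k : ℤ) (n : ℕ) (h : (k, n) ∈ c.I) :
    interior (c.Q (k, n)) = interior (closure (c.Q (k, n))) ∧
      closure (interior (c.Q (k, n))) = closure (c.Q (k, n)) := by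
  set Us : Set X :=
    ⋃ (m : {m : ℕ // (k, m) ∈ c.I ∧ c.olt (k, m) (k, n)}), c.K (k, m.1) with hUs
  have hUclosed : IsClosed Us := c.earlier_closed k n
  have hQrep : c.Q (k, n) = c.K (k, n) \ Us := c.Q_eq k n h
  have hclQ : closure (c.Q (k, n)) = c.K (k, n) := c.closure_Q k n h
  have hopen_sub : interior (c.K (k, n)) ∩ Usᶜ ⊆ interior (c.Q (k, n)) := by
    apply interior_maximal
    · rw [hQrep]
      exact fun z hz => ⟨interior_subset hz.1, hz.2⟩
    · exact isOpen_interior.inter hUclosed.isOpen_compl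
  constructor
  · apply le_antisymm
    · exact interior_mono subset_closure
    · intro y hy
      rw [hclQ] at hy
      by_cases hyU : y ∈ Us
      · exfalso
        rcases Set.mem_iUnion.1 hyU with ⟨⟨m, hmI, hmolt⟩, hyK⟩
        have hmn : (k, m) ≠ (k, n) := by
          intro he
          rw [he] at hmolt
          exact c.olt_asymm (k, n) (k, n) rfl hmolt hmolt
        have hreg := c.K_regular (k, m) hmI
        have hy2 : y ∈ closure (interior (c.K (k, m))) := by rw [hreg]; exact hyK
        rw [_root_.mem_closure_iff] at hy2
        obtain ⟨z, hz1, hz2⟩ := hy2 (interior (c.K (k, n))) isOpen_interior hy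
        have hdisj := c.interior_K_disjoint (k, m) (k, n) hmI h rfl (Ne.symm hmn)
        rw [Set.eq_empty_iff_forall_notMem] at hdisj
        exact hdisj z ⟨hz2, interior_subset hz1⟩
      · exact hopen_sub ⟨hy, hyU⟩
  · apply le_antisymm (closure_mono interior_subset)
    have hQsub : c.Q (k, n) ⊆ closure (interior (c.Q (k, n))) := by
      intro y hy
      have hyK : y ∈ c.K (k, n) := c.Q_sub_K k n hy
      have hyU : y ∉ Us := by
        rw [hQrep] at hy
        exact hy.2
      have hy2 : y ∈ closure (interior (c.K (k, n))) := by
        rw [c.K_regular (k, n) h]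
        exact hyK
      have hy3 : y ∈ closure (interior (c.K (k, n)) ∩ Usᶜ) :=
        mem_closure_inter_open hUclosed.isOpen_compl hy2 hyU
      exact closure_mono hopen_sub hy3
    calc closure (c.Q (k, n)) ≤ closure (closure (interior (c.Q (k, n)))) :=
          closure_mono hQsub
      _ = closure (interior (c.Q (k, n))) := closure_closure


/-- (D5): chains of three cubes. -/
lemma Ctx.Q_chain (k : ℤ) (y z : X) (hd : dist y z ≤ c.C₃ * c.r ^ k) :
    ∃ n₀ n₁ n₂ : ℕ, (k, n₀) ∈ c.I ∧ (k, n₁) ∈ c.I ∧ (k, n₂) ∈ c.I ∧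
      (closure (c.Q (k, n₀)) ∩ closure (c.Q (k, n₁))).Nonempty ∧
      (closure (c.Q (k, n₁)) ∩ closure (c.Q (k, n₂))).Nonempty ∧
      y ∈ closure (c.Q (k, n₀)) ∧ z ∈ closure (c.Q (k, n₂)) := by
  have hrk := c.rk_pos k
  obtain ⟨nb, hnbI, hnbd⟩ := c.net.covering y k
  have hy8 : dist y (c.x (k, nb)) < (c.Cstar + c.C₃) * c.r ^ k := by
    nlinarith [mul_pos c.hC₃ hrk]
  have hz8 : dist z (c.x (k, nb)) < (c.Cstar + c.C₃) * c.r ^ k := by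
    have htri : dist z (c.x (k, nb)) ≤ dist z y + dist y (c.x (k, nb)) := dist_triangle _ _ _
    rw [dist_comm z y] at htri
    nlinarith
  obtain ⟨ay, hayI, haylev, hyKay, htty⟩ := c.L8 k (k, nb) hnbI rfl y hy8
  obtain ⟨az, hazI, hazlev, hzKaz, httz⟩ := c.L8 k (k, nb) hnbI rfl z hz8
  have hayform : ay = (k, ay.2) := Prod.ext haylev rfl
  have hazform : az = (k, az.2) := Prod.ext hazlev rfl
  refine ⟨ay.2, nb, az.2, by rw [← hayform]; exact hayI, hnbI,
    by rw [← hazform]; exact hazI, ?_, ?_, ?_, ?_⟩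
  · rw [c.closure_Q k ay.2 (by rw [← hayform]; exact hayI), c.closure_Q k nb hnbI,
      ← hayform]
    exact htty
  · rw [c.closure_Q k nb hnbI, c.closure_Q k az.2 (by rw [← hazform]; exact hazI),
      ← hazform]
    rw [Set.inter_comm]
    exact httz
  · rw [c.closure_Q k ay.2 (by rw [← hayform]; exact hayI), ← hayform]
    exact hyKay
  · rw [c.closure_Q k az.2 (by rw [← hazform]; exact hazI), ← hazform]
    exact hzKaz

end DyadicAux

/-- **Proposition (T ⇒ Main).** If for every `r ∈ (0, r₀]` every net system admits a map
`π` satisfying (T1)–(T5), where `r₀/(1-r₀)·α₁ < min(α₂, α₃ - C*)`, then the conclusion of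
the dyadic cube theorem holds: there are `C₁, C₂, C₃ > 0` such that every net system with
parameter `r ∈ (0, r₀]` admits cubes satisfying (D1)–(D5). -/
theorem T_implies_main {X : Type*} [MetricSpace X] [CompleteSpace X]
    (hD : Doubling X) (hUP : UniformlyPerfect X)
    (cstar Cstar α₁ α₂ α₃ r₀ : ℝ) (hc : 0 < cstar) (hcC : cstar < Cstar)
    (hα₁ : 0 < α₁) (hα₂ : 0 < α₂) (hα₃ : 0 < α₃)
    (hr₀0 : 0 < r₀) (hr₀1 : r₀ < 1)
    (hcond : r₀ / (1 - r₀) * α₁ < min α₂ (α₃ - Cstar))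
    (hT : ∀ r : ℝ, 0 < r → r ≤ r₀ →
      ∀ (I : Set (ℤ × ℕ)) (x : ℤ × ℕ → X), IsNetSystem cstar Cstar r I x →
      ∃ π : ℤ × ℕ → ℤ × ℕ, SatisfiesT Cstar r α₁ α₂ α₃ I x π) :
    ∃ C₁ C₂ C₃ : ℝ, 0 < C₁ ∧ 0 < C₂ ∧ 0 < C₃ ∧
      ∀ r : ℝ, 0 < r → r ≤ r₀ →
      ∀ (I : Set (ℤ × ℕ)) (x : ℤ × ℕ → X), IsNetSystem cstar Cstar r I x →
      ∃ Q : ℤ × ℕ → Set X,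
        -- (D1)
        (∀ k : ℤ, (⋃ n ∈ {n : ℕ | (k, n) ∈ I}, Q (k, n)) = univ) ∧
        -- (D2)
        (∀ ω ∈ I, interior (Q ω) = interior (closure (Q ω)) ∧
          closure (interior (Q ω)) = closure (Q ω)) ∧
        -- (D3)
        (∀ k l : ℤ, k ≤ l → ∀ m n : ℕ, (l, m) ∈ I → (k, n) ∈ I →
          Q (l, m) ⊆ Q (k, n) ∨ Q (l, m) ∩ Q (k, n) = ∅) ∧
        -- (D4)
        (∀ (k : ℤ) (n : ℕ), (k, n) ∈ I →
          ball (x (k, n)) (C₁ * r ^ k) ⊆ Q (k, n) ∧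
          Q (k, n) ⊆ ball (x (k, n)) (C₂ * r ^ k)) ∧
        -- (D5)
        (∀ (k : ℤ) (y z : X), dist y z ≤ C₃ * r ^ k →
          ∃ n₀ n₁ n₂ : ℕ, (k, n₀) ∈ I ∧ (k, n₁) ∈ I ∧ (k, n₂) ∈ I ∧
            (closure (Q (k, n₀)) ∩ closure (Q (k, n₁))).Nonempty ∧
            (closure (Q (k, n₁)) ∩ closure (Q (k, n₂))).Nonempty ∧
            y ∈ closure (Q (k, n₀)) ∧ z ∈ closure (Q (k, n₂))) := by
  classical
  have h1r₀ : (0:ℝ) < 1 - r₀ := by linarith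
  have hs_pos : 0 < r₀ / (1 - r₀) * α₁ := by positivity
  have hsα₂ : r₀ / (1 - r₀) * α₁ < α₂ := lt_of_lt_of_le hcond (min_le_left _ _)
  have hsα₃ : r₀ / (1 - r₀) * α₁ < α₃ - Cstar := lt_of_lt_of_le hcond (min_le_right _ _)
  refine ⟨min (cstar / 2) ((α₂ - r₀ / (1 - r₀) * α₁) / 2), α₁ / (1 - r₀) + 1,
    (α₃ - Cstar - r₀ / (1 - r₀) * α₁) / 3, ?_, ?_, ?_, ?_⟩
  · exact lt_min (by linarith) (by linarith)
  · positivity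
  · linarith
  intro r hr0 hrr₀ I x hnet
  obtain ⟨pi, hpi⟩ := hT r hr0 hrr₀ I x hnet
  set c : DyadicAux.Ctx X :=
    ⟨cstar, Cstar, α₁, α₂, α₃, r₀, r, I, x, pi, hD, hc, hcC, hα₁, hα₂, hα₃,
      hr0, hrr₀, hr₀0, hr₀1, hcond, hnet, hpi⟩ with hcdef
  refine ⟨c.Q, ?_, ?_, ?_, ?_, ?_⟩
  · intro k
    exact c.Q_cover k
  · rintro ⟨k, n⟩ hω
    exact c.Q_regular k n hω
  · intro k l hkl m n _ _
    exact c.Q_nested k l hkl m n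
  · intro k n h
    refine ⟨?_, ?_⟩
    · have hsub := c.ball_subset_Q k n h
      have : min (cstar / 2) ((α₂ - r₀ / (1 - r₀) * α₁) / 2) = c.δ := rfl
      rw [this]
      exact hsub
    · have hsub := c.Q_subset_ball k n h
      have : α₁ / (1 - r₀) + 1 = c.t + 1 := rfl
      rw [this]
      exact hsub
  · intro k y z hd
    have : (α₃ - Cstar - r₀ / (1 - r₀) * α₁) / 3 = c.C₃ := rfl
    rw [this] at hd
    exact c.Q_chain k y z hd
end

section
/- Under the standing assumptions (complete doubling uniformly perfect (X,d), net system with parameters (c*, C*, r), r ∈ (0,r₀], map π satisfying (T1)–(T5) with (r₀/(1−r₀))·α₁ < min(α₂, α₃ − C*)), for every k ∈ ℤ one has ⋃_{ω∈Ω_k} K_ω = X. -/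
open Metric Set

/-- Auxiliary: in a doubling space, a `c`-separated subset of a ball is finite. -/
lemma sep_finite_of_doubling {X : Type*} [MetricSpace X] (hD : Doubling X)
    {c : ℝ} (hc : 0 < c) :
    ∀ (j : ℕ) (z : X) (R : ℝ), R ≤ 2 ^ j * (c / 2) →
      ∀ s : Set X, s ⊆ ball z R → s.Pairwise (fun a b => c ≤ dist a b) → s.Finite := by
  obtain ⟨N, hN⟩ := hD
  intro j
  induction j with
  | zero =>
    intro z R hR s hs hsep
    apply Set.Subsingleton.finite
    intro a ha b hb
    by_contra hab
    have h1 := hsep ha hb hab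
    have da : dist a z < R := mem_ball.1 (hs ha)
    have db : dist b z < R := mem_ball.1 (hs hb)
    have : dist a b < c := by
      calc dist a b ≤ dist a z + dist z b := dist_triangle a z b
        _ < R + R := by rw [dist_comm z b]; linarith
        _ ≤ c := by simpa using by linarith [hR]
    linarith
  | succ j ih =>
    intro z R hR s hs hsep
    obtain ⟨cnt, hcnt⟩ := hN z (R / 2)
    have hsub : s ⊆ ⋃ i, s ∩ ball (cnt i) (R / 2) := by
      intro a ha
      have : a ∈ ball z (2 * (R / 2)) := by
        rw [show 2 * (R / 2) = R by ring]; exact hs ha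
      obtain ⟨i, hat⟩ := mem_iUnion.1 (hcnt this)
      exact mem_iUnion.2 ⟨i, ha, hat⟩
    have hfin : ∀ i : Fin N, (s ∩ ball (cnt i) (R / 2)).Finite := by
      intro i
      refine ih (cnt i) (R / 2) ?_ _ Set.inter_subset_right
        (hsep.mono Set.inter_subset_left)
      have : (2:ℝ) ^ (j + 1) = 2 * 2 ^ j := by ring
      nlinarith [hR]
    exact (Set.finite_iUnion hfin).subset hsub

/-- Lemma: the sets `K_ω`, `ω ∈ Ω_k`, cover `X` for every `k`. -/
theorem Kset_cover
    {X : Type*} [MetricSpace X] [CompleteSpace X]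
    (hD : Doubling X) (hUP : UniformlyPerfect X)
    (cstar Cstar α₁ α₂ α₃ r₀ r : ℝ) (hc : 0 < cstar) (hcC : cstar < Cstar)
    (hα₁ : 0 < α₁) (hα₂ : 0 < α₂) (hα₃ : 0 < α₃)
    (hr₀0 : 0 < r₀) (hr₀1 : r₀ < 1)
    (hcond : r₀ / (1 - r₀) * α₁ < min α₂ (α₃ - Cstar))
    (hr0 : 0 < r) (hrr₀ : r ≤ r₀)
    (I : Set (ℤ × ℕ)) (x : ℤ × ℕ → X) (hnet : IsNetSystem cstar Cstar r I x)
    (π : ℤ × ℕ → ℤ × ℕ) (hπ : SatisfiesT Cstar r α₁ α₂ α₃ I x π)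
    :
    ∀ k : ℤ, (⋃ n ∈ {n : ℕ | (k, n) ∈ I}, Kset I x π (k, n)) = univ := by
  intro k
  have hr1 : r < 1 := lt_of_le_of_lt hrr₀ hr₀1
  have hrk : (0:ℝ) < r ^ k := zpow_pos hr0 k
  have hC : (0:ℝ) < Cstar := lt_trans hc hcC
  ext y
  simp only [mem_iUnion, mem_univ, iff_true]
  -- pick a nearby net point at each level k + l
  choose nl hnlI hnld using fun l : ℕ => hnet.covering y (k + l)
  set lam : ℕ → ℤ × ℕ := fun l => ((k + l : ℤ), nl l) with hlam
  -- iterating π keeps indices in I and drops levels to k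
  have hlev : ∀ l : ℕ, ∀ p : ℤ × ℕ, p ∈ I → p.1 = k + l →
      π^[l] p ∈ I ∧ (π^[l] p).1 = k := by
    intro l
    induction l with
    | zero => intro p hp hl; simpa using ⟨hp, by simpa using hl⟩
    | succ l ih =>
      intro p hp hl
      have hpeq : ((k + l : ℤ) + 1, p.2) = p := by
        ext
        · simp [hl]; push_cast; ring
        · rfl
      have h1 := hπ.maps_into (k + l) p.2 (by rw [hpeq]; exact hp)
      rw [hpeq] at h1
      rw [Function.iterate_succ_apply]
      exact ih (π p) h1.1 h1.2
  -- the telescoping distance bound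
  have hdist : ∀ l : ℕ, ∀ p : ℤ × ℕ, p ∈ I → p.1 = k + l →
      dist (x p) (x (π^[l] p)) ≤ α₁ * ∑ j ∈ Finset.range l, r ^ (k + j : ℤ) := by
    intro l
    induction l with
    | zero => intro p hp hl; simp
    | succ l ih =>
      intro p hp hl
      have hpeq : ((k + l : ℤ) + 1, p.2) = p := by
        ext
        · simp [hl]; push_cast; ring
        · rfl
      have h1 := hπ.maps_into (k + l) p.2 (by rw [hpeq]; exact hp)
      rw [hpeq] at h1
      have hT2 := hπ.T2 (k + l) p.2 (by rw [hpeq]; exact hp)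
      rw [hpeq] at hT2
      have h2 := ih (π p) h1.1 h1.2
      rw [Function.iterate_succ_apply]
      calc dist (x p) (x (π^[l] (π p)))
          ≤ dist (x p) (x (π p)) + dist (x (π p)) (x (π^[l] (π p))) :=
            dist_triangle _ _ _
        _ ≤ α₁ * r ^ (k + l : ℤ) + α₁ * ∑ j ∈ Finset.range l, r ^ (k + j : ℤ) := by
            exact add_le_add hT2.le h2
        _ = α₁ * ∑ j ∈ Finset.range (l + 1), r ^ (k + j : ℤ) := by
            rw [Finset.sum_range_succ]; push_cast; ring
  -- bound the geometric sum
  have hsum : ∀ l : ℕ, ∑ j ∈ Finset.range l, r ^ (k + j : ℤ) ≤ r ^ k / (1 - r) := by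
    intro l
    have : ∑ j ∈ Finset.range l, r ^ (k + j : ℤ) = r ^ k * ∑ j ∈ Finset.range l, r ^ j := by
      rw [Finset.mul_sum]
      refine Finset.sum_congr rfl fun j _ => ?_
      rw [zpow_add₀ (ne_of_gt hr0), zpow_natCast]
    rw [this, geom_sum_eq (ne_of_lt hr1)]
    have h1r : (0:ℝ) < 1 - r := by linarith
    have hpl : (0:ℝ) ≤ r ^ l := pow_nonneg hr0.le l
    have hgs : (r ^ l - 1) / (r - 1) ≤ 1 / (1 - r) := by
      have hne1 : r - 1 ≠ 0 := sub_ne_zero.2 (ne_of_lt hr1)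
      rw [show (r ^ l - 1) / (r - 1) = (1 - r ^ l) / (1 - r) by
        rw [div_eq_div_iff hne1 h1r.ne']; ring]
      gcongr
      · linarith
    calc r ^ k * ((r ^ l - 1) / (r - 1)) ≤ r ^ k * (1 / (1 - r)) :=
          mul_le_mul_of_nonneg_left hgs hrk.le
      _ = r ^ k / (1 - r) := by ring
  set R : ℝ := Cstar * r ^ k + α₁ * (r ^ k / (1 - r)) with hR
  -- the level-k ancestors lie within R of y
  have hlamI : ∀ l, lam l ∈ I := fun l => (hnlI l)
  have hiter : ∀ l : ℕ, π^[l] (lam l) ∈ I ∧ (π^[l] (lam l)).1 = k :=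
    fun l => hlev l (lam l) (hlamI l) rfl
  have hdy : ∀ l : ℕ, dist y (x (π^[l] (lam l))) ≤ R := by
    intro l
    have h1 : dist y (x (lam l)) < Cstar * r ^ (k + l : ℤ) := hnld l
    have h2 := hdist l (lam l) (hlamI l) rfl
    have h3 : r ^ (k + l : ℤ) ≤ r ^ k := by
      rw [zpow_add₀ (ne_of_gt hr0), zpow_natCast]
      nlinarith [pow_le_one₀ hr0.le hr1.le (n := l), hrk]
    calc dist y (x (π^[l] (lam l)))
        ≤ dist y (x (lam l)) + dist (x (lam l)) (x (π^[l] (lam l))) := dist_triangle _ _ _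
      _ ≤ Cstar * r ^ k + α₁ * (r ^ k / (1 - r)) := by
          have := hsum l
          nlinarith [h1, h2, hC, hα₁]
  -- the candidate set of level-k indices is finite
  set T : Set ℕ := {n : ℕ | (k, n) ∈ I ∧ dist y (x (k, n)) ≤ R} with hT
  have hTfin : T.Finite := by
    have hinj : Set.InjOn (fun n => x (k, n)) T := by
      intro n hn m hm hnm
      by_contra hne
      have := hnet.separated k n m hn.1 hm.1 hne
      have hnm' : x (k, n) = x (k, m) := hnm
      rw [hnm', dist_self] at this
      nlinarith
    have himfin : ((fun n => x (k, n)) '' T).Finite := by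
      obtain ⟨j, hj⟩ := pow_unbounded_of_one_lt ((R + 1) / (cstar * r ^ k / 2)) (by norm_num : (1:ℝ) < 2)
      refine sep_finite_of_doubling hD (mul_pos hc hrk) j y (R + 1) ?_ _ ?_ ?_
      · have h2 : (0:ℝ) < cstar * r ^ k / 2 := by positivity
        rw [div_lt_iff₀ h2] at hj
        linarith [hj]
      · rintro a ⟨n, hn, rfl⟩
        exact mem_ball.2 (by rw [dist_comm]; linarith [hn.2])
      · rintro a ⟨n, hn, rfl⟩ b ⟨m, hm, rfl⟩ hab
        have hne : n ≠ m := fun h => hab (by rw [h])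
        exact hnet.separated k n m hn.1 hm.1 hne
    exact Set.Finite.of_finite_image himfin hinj
  -- pigeonhole: infinitely many levels share the same level-k ancestor
  set f : ℕ → ℕ := fun l => (π^[l] (lam l)).2 with hf
  have hpe : ∀ l, π^[l] (lam l) = (k, f l) := by
    intro l
    ext
    · exact (hiter l).2
    · rfl
  have hfT : ∀ l, f l ∈ T := by
    intro l
    constructor
    · rw [← hpe l]; exact (hiter l).1
    · rw [← hpe l]; exact hdy l
  have hpig : ∃ n₀ ∈ T, {l : ℕ | f l = n₀}.Infinite := by
    by_contra h
    push_neg at h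
    have hcov : (univ : Set ℕ) ⊆ ⋃ n ∈ T, {l | f l = n} := by
      intro l _
      exact mem_iUnion₂.2 ⟨f l, hfT l, rfl⟩
    have : (univ : Set ℕ).Finite :=
      (Set.Finite.biUnion hTfin fun n hn => h n hn).subset hcov
    exact Set.infinite_univ this
  obtain ⟨n₀, hn₀T, hinf⟩ := hpig
  refine ⟨n₀, hn₀T.1, ?_⟩
  rw [Kset, Metric.mem_closure_iff]
  intro ε hε
  obtain ⟨L, hL⟩ := exists_pow_lt_of_lt_one (x := ε / (Cstar * r ^ k)) (by positivity) hr1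
  obtain ⟨l, hl, hLl⟩ := hinf.exists_gt L
  refine ⟨x (lam l), mem_iUnion.2 ⟨l, ⟨lam l, ⟨hlamI l, by rw [hpe l, hl]⟩, rfl⟩⟩, ?_⟩
  have h1 : dist y (x (lam l)) < Cstar * r ^ (k + l : ℤ) := hnld l
  have h2 : r ^ (k + l : ℤ) ≤ r ^ k * r ^ L := by
    rw [zpow_add₀ (ne_of_gt hr0), zpow_natCast]
    exact mul_le_mul_of_nonneg_left (pow_le_pow_of_le_one hr0.le hr1.le hLl.le) hrk.le
  have h3 : Cstar * (r ^ k * r ^ L) < ε := by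
    rw [lt_div_iff₀ (by positivity)] at hL
    nlinarith [hL]
  nlinarith [h1, h2, hC]
end

section
/- Under the standing assumptions (complete doubling uniformly perfect (X,d), net system with parameters (c*, C*, r), r ∈ (0,r₀], map π satisfying (T1)–(T5) with (r₀/(1−r₀))·α₁ < min(α₂, α₃ − C*)), let α₅ = α₂ − α₁r₀/(1−r₀). Then for every (k,n) ∈ Ω, the open ball B(x_{k,n}, α₅ r^k) is contained in K_{k,n}. -/
/-!
Given `y` with `d(y, x_{k,n}) < α₅ r^k`, the covering property (C) yields, for every `l`, a net
point `x_ω` at level `k + l + 1` with `d(y, x_ω) < C* r^{k+l+1}`. By (T2) the points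
`x_ω, x_{π ω}, …` along the ancestor chain of `ω` move by at most a geometric series, so the
ancestor `λ = π^l ω` at level `k + 1` satisfies `d(x_λ, x_ω) ≤ α₁ r^{k+1}/(1-r) ≤ α₁ r₀/(1-r₀) r^k`.
For large `l` this puts `x_λ` within `α₂ r^k` of `x_{k,n}`, so (T3) forces `π λ = (k,n)`: the point
`x_ω`, which is as close to `y` as we like, belongs to `K_{k,n}`.
-/

open Metric Set

open Filter

namespace SatisfiesT

variable {X : Type*} [PseudoMetricSpace X] {Cstar r α₁ α₂ α₃ : ℝ} {I : Set (ℤ × ℕ)}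
  {x : ℤ × ℕ → X} {π : ℤ × ℕ → ℤ × ℕ}

theorem map_mem_and_level (hπ : SatisfiesT Cstar r α₁ α₂ α₃ I x π) {ω : ℤ × ℕ} (hω : ω ∈ I) :
    π ω ∈ I ∧ (π ω).1 = ω.1 - 1 := by
  obtain ⟨K, m⟩ := ω
  simpa using hπ.maps_into (K - 1) m (by simpa using hω)

theorem dist_map_lt (hπ : SatisfiesT Cstar r α₁ α₂ α₃ I x π) {ω : ℤ × ℕ} (hω : ω ∈ I) :
    dist (x ω) (x (π ω)) < α₁ * r ^ (ω.1 - 1) := by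
  obtain ⟨K, m⟩ := ω
  simpa using hπ.T2 (K - 1) m (by simpa using hω)

theorem iterate_mem_and_level (hπ : SatisfiesT Cstar r α₁ α₂ α₃ I x π) {ω : ℤ × ℕ}
    (hω : ω ∈ I) (j : ℕ) : π^[j] ω ∈ I ∧ (π^[j] ω).1 = ω.1 - j := by
  induction j with
  | zero => simpa using hω
  | succ j ih =>
    obtain ⟨hmem, hlevel⟩ := hπ.map_mem_and_level ih.1
    rw [Function.iterate_succ_apply', hlevel, ih.2]
    exact ⟨hmem, by push_cast; ring⟩

theorem dist_iterate_le (hπ : SatisfiesT Cstar r α₁ α₂ α₃ I x π) (hr0 : 0 < r) (hr1 : r < 1)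
    (hα₁ : 0 ≤ α₁) {ω : ℤ × ℕ} (hω : ω ∈ I) (j : ℕ) :
    dist (x (π^[j] ω)) (x ω) ≤ α₁ * r ^ (ω.1 - j) / (1 - r) := by
  have h1r : 0 < 1 - r := sub_pos.2 hr1
  induction j with
  | zero => simp only [Function.iterate_zero_apply, dist_self]; positivity
  | succ j ih =>
    obtain ⟨hmem, hlevel⟩ := hπ.iterate_mem_and_level hω j
    have hstep := hπ.dist_map_lt hmem
    rw [hlevel] at hstep
    have hpow : r ^ (ω.1 - j) = r ^ (ω.1 - j - 1) * r := by
      rw [← zpow_add_one₀ hr0.ne', sub_add_cancel]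
    have hsum : α₁ * r ^ (ω.1 - j - 1) + α₁ * r ^ (ω.1 - j) / (1 - r)
        = α₁ * r ^ (ω.1 - ↑(j + 1)) / (1 - r) := by
      rw [hpow, Nat.cast_succ, ← sub_sub]
      field_simp
      ring
    calc dist (x (π^[j + 1] ω)) (x ω)
        ≤ dist (x (π (π^[j] ω))) (x (π^[j] ω)) + dist (x (π^[j] ω)) (x ω) := by
          rw [Function.iterate_succ_apply']; exact dist_triangle _ _ _
      _ ≤ α₁ * r ^ (ω.1 - ↑(j + 1)) / (1 - r) := by
          rw [dist_comm, ← hsum]; exact add_le_add hstep.le ih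

theorem iterate_eq_of_dist_lt (hπ : SatisfiesT Cstar r α₁ α₂ α₃ I x π) (hr0 : 0 < r)
    (hr1 : r < 1) (hα₁ : 0 ≤ α₁) {k : ℤ} {n : ℕ} (hkn : (k, n) ∈ I) {ω : ℤ × ℕ} (hω : ω ∈ I)
    {l : ℕ} (hlevel : ω.1 = k + (l + 1))
    (hclose : dist (x (k, n)) (x ω) + α₁ * r / (1 - r) * r ^ k < α₂ * r ^ k) :
    π^[l + 1] ω = (k, n) := by
  obtain ⟨hmem, hlevel'⟩ := hπ.iterate_mem_and_level hω l
  have hexp : ω.1 - l = k + 1 := by rw [hlevel]; ring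
  have hanc : π^[l] ω = (k + 1, (π^[l] ω).2) := Prod.ext (hlevel'.trans hexp) rfl
  have hchain : dist (x ω) (x (π^[l] ω)) ≤ α₁ * r / (1 - r) * r ^ k := by
    rw [dist_comm]
    convert hπ.dist_iterate_le hr0 hr1 hα₁ hω l using 1
    rw [hexp, zpow_add_one₀ hr0.ne']
    ring
  have hT3 := hπ.T3 k n (π^[l] ω).2 hkn (hanc ▸ hmem) <| by
    rw [← hanc]
    linarith [dist_triangle (x (k, n)) (x ω) (x (π^[l] ω))]
  rw [Function.iterate_succ_apply', hanc, hT3]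

end SatisfiesT

theorem IsNetSystem.exists_deeper_dist_lt {X : Type*} [PseudoMetricSpace X]
    {cstar Cstar r : ℝ} {I : Set (ℤ × ℕ)} {x : ℤ × ℕ → X} (hnet : IsNetSystem cstar Cstar r I x)
    (hr0 : 0 < r) (hr1 : r < 1) (y : X) (k : ℤ) {ε : ℝ} (hε : 0 < ε) :
    ∃ l : ℕ, ∃ m : ℕ, (k + (l + 1), m) ∈ I ∧ dist y (x (k + (l + 1), m)) < ε := by
  have hlim : Tendsto (fun l : ℕ => Cstar * r ^ k * r * r ^ l) atTop (nhds 0) := by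
    simpa using (tendsto_pow_atTop_nhds_zero_of_lt_one hr0.le hr1).const_mul (Cstar * r ^ k * r)
  obtain ⟨l, hl⟩ := (hlim.eventually_lt_const hε).exists
  obtain ⟨m, hmI, hm⟩ := hnet.covering y (k + (l + 1))
  refine ⟨l, m, hmI, ?_⟩
  calc dist y (x (k + (l + 1), m)) < Cstar * r ^ (k + (l + 1)) := hm
    _ = Cstar * r ^ k * r * r ^ l := by
      rw [zpow_add₀ hr0.ne', zpow_add_one₀ hr0.ne', zpow_natCast]; ring
    _ < ε := hl

theorem ball_subset_Kset_general
    {X : Type*} [MetricSpace X]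
    (cstar Cstar α₁ α₂ α₃ r₀ r : ℝ)
    (hα₁ : 0 < α₁)
    (hr₀1 : r₀ < 1)
    (hr0 : 0 < r) (hrr₀ : r ≤ r₀)
    (I : Set (ℤ × ℕ)) (x : ℤ × ℕ → X) (hnet : IsNetSystem cstar Cstar r I x)
    (π : ℤ × ℕ → ℤ × ℕ) (hπ : SatisfiesT Cstar r α₁ α₂ α₃ I x π)
    :
    ∀ (k : ℤ) (n : ℕ), (k, n) ∈ I →
      ball (x (k, n)) ((α₂ - α₁ * r₀ / (1 - r₀)) * r ^ k) ⊆ Kset I x π (k, n) := by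
  intro k n hkn y hy
  have hr1 : r < 1 := hrr₀.trans_lt hr₀1
  have hslack : α₁ * r / (1 - r) * r ^ k ≤ α₁ * r₀ / (1 - r₀) * r ^ k := by
    gcongr
    exact mul_nonneg hα₁.le (hr0.le.trans hrr₀)
  refine Metric.mem_closure_iff.2 fun ε hε => ?_
  obtain ⟨l, m, hmI, hym⟩ :=
    hnet.exists_deeper_dist_lt hr0 hr1 y k (lt_min hε (sub_pos.2 (mem_ball.1 hy)))
  have hdesc := hπ.iterate_eq_of_dist_lt hr0 hr1 hα₁.le hkn hmI rfl <| by
    linarith [dist_triangle (x (k, n)) y (x (k + (l + 1), m)), dist_comm y (x (k, n)),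
      min_le_right ε ((α₂ - α₁ * r₀ / (1 - r₀)) * r ^ k - dist y (x (k, n)))]
  exact ⟨_, mem_iUnion.2 ⟨l + 1, mem_image_of_mem x ⟨hmI, hdesc⟩⟩, hym.trans_le (min_le_left _ _)⟩

/-- Lemma: the open ball of radius `α₅ r^k` around `x_{k,n}` is contained in
`K_{k,n}`, where `α₅ = α₂ - α₁ r₀/(1-r₀)`. -/
theorem ball_subset_Kset
    {X : Type*} [MetricSpace X] [CompleteSpace X]
    (hD : Doubling X) (hUP : UniformlyPerfect X)
    (cstar Cstar α₁ α₂ α₃ r₀ r : ℝ) (hc : 0 < cstar) (hcC : cstar < Cstar)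
    (hα₁ : 0 < α₁) (hα₂ : 0 < α₂) (hα₃ : 0 < α₃)
    (hr₀0 : 0 < r₀) (hr₀1 : r₀ < 1)
    (hcond : r₀ / (1 - r₀) * α₁ < min α₂ (α₃ - Cstar))
    (hr0 : 0 < r) (hrr₀ : r ≤ r₀)
    (I : Set (ℤ × ℕ)) (x : ℤ × ℕ → X) (hnet : IsNetSystem cstar Cstar r I x)
    (π : ℤ × ℕ → ℤ × ℕ) (hπ : SatisfiesT Cstar r α₁ α₂ α₃ I x π)
    :
    ∀ (k : ℤ) (n : ℕ), (k, n) ∈ I →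
      ball (x (k, n)) ((α₂ - α₁ * r₀ / (1 - r₀)) * r ^ k) ⊆ Kset I x π (k, n) :=
  ball_subset_Kset_general cstar Cstar α₁ α₂ α₃ r₀ r hα₁ hr₀1 hr0 hrr₀ I x hnet π hπ
end

section
/- Under the standing assumptions (complete doubling uniformly perfect (X,d), net system with parameters (c*, C*, r), r ∈ (0,r₀], map π satisfying (T1)–(T5) with (r₀/(1−r₀))·α₁ < min(α₂, α₃ − C*)), define O_{k,n} = X \ ⋃_{o ≠ n} K_{k,o}. Then O_{k,n} equals the interior of K_{k,n}, and the closure of O_{k,n} equals K_{k,n}. -/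
open Metric Set

section AuxDoubling

variable {X : Type*} [MetricSpace X]

/-- In a doubling space, every ball is totally bounded. -/
lemma Doubling.totallyBounded_closedBall (hD : Doubling X) (y : X) (R : ℝ) :
    TotallyBounded (closedBall y R) := by
  obtain ⟨N, hN⟩ := hD
  have key : ∀ m : ℕ, ∀ (z : X) (S : ℝ), ∃ s : Set X, s.Finite ∧
      ball z S ⊆ ⋃ c ∈ s, ball c (S / 2 ^ m) := by
    intro m
    induction m with
    | zero =>
      intro z S
      exact ⟨{z}, finite_singleton z, by simp⟩
    | succ m ih =>
      intro z S
      obtain ⟨c, hc⟩ := hN z (S / 2)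
      choose s hsf hs using fun i => ih (c i) (S / 2)
      refine ⟨⋃ i, s i, Set.finite_iUnion hsf, ?_⟩
      intro w hw
      have hw2 : w ∈ ball z (2 * (S / 2)) := by
        rwa [mul_div_cancel₀] ; norm_num
      obtain ⟨_, ⟨i, rfl⟩, hwi⟩ := hc hw2
      obtain ⟨p, hp, hwp⟩ := mem_iUnion₂.1 (hs i hwi)
      refine mem_biUnion (mem_iUnion.2 ⟨i, hp⟩) ?_
      have : S / 2 / 2 ^ m = S / 2 ^ (m + 1) := by
        rw [div_div]; ring_nf
      rwa [this] at hwp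
  rw [Metric.totallyBounded_iff]
  intro ε hε
  set S := max R 0 + 1 with hS
  have hS0 : 0 < S := by positivity
  obtain ⟨m, hm⟩ := exists_pow_lt_of_lt_one (x := ε / S) (y := (1 : ℝ) / 2)
    (by positivity) (by norm_num)
  obtain ⟨s, hsf, hsub⟩ := key m y S
  refine ⟨s, hsf, fun w hw => ?_⟩
  have hw' : w ∈ ball y S := by
    rw [mem_closedBall] at hw
    rw [mem_ball]
    have : R ≤ max R 0 := le_max_left _ _
    linarith
  obtain ⟨c, hc, hwc⟩ := mem_iUnion₂.1 (hsub hw')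
  refine mem_biUnion hc ?_
  have h2m : (0:ℝ) < 2 ^ m := by positivity
  have hm2 : 1 / 2 ^ m < ε / S := by
    rwa [div_pow, one_pow] at hm
  have h1 : S / 2 ^ m < ε := by
    have h3 := (div_lt_div_iff₀ h2m hS0).1 hm2
    rw [div_lt_iff₀ h2m]
    nlinarith
  exact mem_ball.2 (lt_trans (mem_ball.1 hwc) h1)

/-- A uniformly separated subset of a closed ball in a doubling space is finite. -/
lemma Doubling.finite_of_separated (hD : Doubling X) {ε : ℝ} (hε : 0 < ε) {s : Set X}
    (y : X) (R : ℝ) (hs : s ⊆ closedBall y R)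
    (hsep : ∀ p ∈ s, ∀ q ∈ s, p ≠ q → ε ≤ dist p q) : s.Finite := by
  have htb := hD.totallyBounded_closedBall y R
  rw [Metric.totallyBounded_iff] at htb
  obtain ⟨t, htf, hcov⟩ := htb (ε / 2) (by positivity)
  have hmem : ∀ p ∈ s, ∃ c ∈ t, p ∈ ball c (ε / 2) := by
    intro p hp
    have := hcov (hs hp)
    simpa using this
  classical
  choose! f hf1 hf2 using hmem
  have hinj : Set.InjOn f s := by
    intro p hp q hq hpq
    by_contra hne
    have h1 := hf2 p hp
    have h2 := hf2 q hq
    rw [hpq] at h1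
    have : dist p q < ε := by
      have := dist_triangle p (f q) q
      rw [mem_ball] at h1 h2
      rw [dist_comm q (f q)] at h2
      linarith
    exact absurd (hsep p hp q hq hne) (not_le.2 this)
  have himg : (f '' s).Finite := htf.subset (by
    rintro _ ⟨p, hp, rfl⟩; exact hf1 p hp)
  exact Set.Finite.of_finite_image himg hinj

end AuxDoubling

section AuxNet

variable {X : Type*} [MetricSpace X]
variable {cstar Cstar α₁ α₂ α₃ r : ℝ} {I : Set (ℤ × ℕ)} {x : ℤ × ℕ → X}
  {π : ℤ × ℕ → ℤ × ℕ}

private lemma prod_eta' (p : ℤ × ℕ) (a : ℤ) (h : p.1 = a) : p = (a, p.2) := by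
  rw [← h]

/-- Iterates of `π` stay in `I` and decrease the level by one each step. -/
lemma SatisfiesT.iter_mem (hT : SatisfiesT Cstar r α₁ α₂ α₃ I x π) :
    ∀ (a : ℕ) (lam : ℤ × ℕ), lam ∈ I →
      π^[a] lam ∈ I ∧ (π^[a] lam).1 = lam.1 - a := by
  intro a
  induction a with
  | zero => intro lam h; simpa using h
  | succ a ih =>
    intro lam h
    obtain ⟨h1, h2⟩ := ih lam h
    set μ := π^[a] lam with hμ
    have hμeq : μ = (μ.1 - 1 + 1, μ.2) := prod_eta' μ (μ.1 - 1 + 1) (by ring)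
    have hm := hT.maps_into (μ.1 - 1) μ.2 (by rw [← hμeq]; exact h1)
    rw [← hμeq] at hm
    rw [Function.iterate_succ_apply', ← hμ]
    refine ⟨hm.1, ?_⟩
    rw [hm.2, h2]
    omega

/-- Chain/telescoping distance estimate along `π`-iterates (uses (T2)). -/
lemma SatisfiesT.dist_iter (hT : SatisfiesT Cstar r α₁ α₂ α₃ I x π)
    (hr0 : 0 < r) (hr1 : r < 1) (hα₁ : 0 < α₁) :
    ∀ (a : ℕ) (lam : ℤ × ℕ), lam ∈ I →
      dist (x lam) (x (π^[a] lam)) ≤ α₁ * r ^ (lam.1 - (a : ℤ)) / (1 - r) := by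
  have h1r : 0 < 1 - r := by linarith
  intro a
  induction a with
  | zero =>
    intro lam h
    simp only [Function.iterate_zero_apply, dist_self]
    positivity
  | succ a ih =>
    intro lam h
    obtain ⟨hμI, hμ1⟩ := hT.iter_mem a lam h
    set μ := π^[a] lam with hμ
    have hμeq : μ = (μ.1 - 1 + 1, μ.2) := prod_eta' μ (μ.1 - 1 + 1) (by ring)
    have hT2 := hT.T2 (μ.1 - 1) μ.2 (by rw [← hμeq]; exact hμI)
    rw [← hμeq] at hT2
    have htri : dist (x lam) (x (π^[a+1] lam)) ≤
        dist (x lam) (x μ) + dist (x μ) (x (π μ)) := by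
      rw [Function.iterate_succ_apply', ← hμ]
      exact dist_triangle _ _ _
    have hexp : μ.1 - 1 = lam.1 - ((a : ℤ) + 1) := by rw [hμ1]; push_cast; ring
    rw [hexp] at hT2
    set t := r ^ (lam.1 - ((a : ℤ) + 1)) with ht
    have ht0 : 0 < t := zpow_pos hr0 _
    have hra : r ^ (lam.1 - (a : ℤ)) = t * r := by
      rw [ht, ← zpow_add_one₀ (ne_of_gt hr0)]
      congr 1
      ring
    have hih := ih lam h
    rw [hra] at hih
    have : α₁ * (t * r) / (1 - r) + α₁ * t = α₁ * t / (1 - r) := by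
      field_simp
      ring
    have hcast : ((a : ℤ) + 1) = ((a + 1 : ℕ) : ℤ) := by push_cast; ring
    rw [← hcast]
    linarith [htri, hih, hT2]

/-- Separation of points in distinct branches (uses (c), (T3)). -/
lemma SatisfiesT.branch_sep (hT : SatisfiesT Cstar r α₁ α₂ α₃ I x π)
    (hnet : IsNetSystem cstar Cstar r I x)
    (hr0 : 0 < r) (hr1 : r < 1) (hα₁ : 0 < α₁) (hc : 0 < cstar)
    (hα₂' : α₁ * r / (1 - r) < α₂) :
    ∀ (k : ℤ) (o n' : ℕ), o ≠ n' → ∀ μ ∈ I, ∀ μ' ∈ I, ∀ (a b : ℕ),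
      π^[a] μ = (k, o) → π^[b] μ' = (k, n') → b ≤ a →
      min cstar (α₂ - α₁ * r / (1 - r)) * r ^ (k + (b : ℤ)) ≤ dist (x μ) (x μ') := by
  intro k o n' hon μ hμI μ' hμ'I a b ha hb hba
  have h1r : 0 < 1 - r := by linarith
  set δ := min cstar (α₂ - α₁ * r / (1 - r)) with hδ
  have hδ0 : 0 < δ := lt_min hc (by linarith)
  have hμ1 : μ.1 = k + (a : ℤ) := by
    have := (hT.iter_mem a μ hμI).2
    rw [ha] at this
    simp at this
    linarith
  have hμ'1 : μ'.1 = k + (b : ℤ) := by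
    have := (hT.iter_mem b μ' hμ'I).2
    rw [hb] at this
    simp at this
    linarith
  rcases eq_or_lt_of_le hba with heq | hlt
  · -- same level: use separation
    subst heq
    have hne : μ ≠ μ' := by
      intro hcontr
      rw [hcontr, hb] at ha
      have : n' = o := by injection ha
      exact hon this.symm
    have hμeq : μ = (k + (b : ℤ), μ.2) := prod_eta' μ _ hμ1
    have hμ'eq : μ' = (k + (b : ℤ), μ'.2) := prod_eta' μ' _ hμ'1
    have hne2 : μ.2 ≠ μ'.2 := by
      intro h2
      exact hne (by rw [hμeq, hμ'eq, h2])
    have := hnet.separated (k + (b : ℤ)) μ.2 μ'.2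
      (by rw [← hμeq]; exact hμI) (by rw [← hμ'eq]; exact hμ'I) hne2
    rw [← hμeq, ← hμ'eq] at this
    calc δ * r ^ (k + (b : ℤ)) ≤ cstar * r ^ (k + (b : ℤ)) := by
          apply mul_le_mul_of_nonneg_right (min_le_left _ _) (le_of_lt (zpow_pos hr0 _))
    _ ≤ _ := this
  · -- μ is deeper: go to the level-(k+b+1) ancestor ν of μ and apply (T3)
    set c := a - b - 1 with hcdef
    have hc1 : c + 1 = a - b := by omega
    have hcb : b + c + 1 = a := by omega
    set ν := π^[c] μ with hν
    obtain ⟨hνI, hν1⟩ := hT.iter_mem c μ hμI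
    have hν1' : ν.1 = k + (b : ℤ) + 1 := by
      rw [← hν] at hν1
      rw [hν1, hμ1]
      have : (c : ℤ) = (a : ℤ) - b - 1 := by omega
      rw [this]; ring
    -- π ν has branch (k, o) after b more steps
    have hπν : π^[b] (π ν) = (k, o) := by
      have h1 : π^[b] (π ν) = π^[b + (c + 1)] μ := by
        rw [hν, ← Function.iterate_succ_apply' π c μ,
          ← Function.iterate_add_apply π b (c + 1) μ]
      have h2 : b + (c + 1) = a := by omega
      rw [h1, h2, ha]
    have hπνne : π ν ≠ μ' := by
      intro hcontr
      rw [hcontr, hb] at hπν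
      have : n' = o := by injection hπν
      exact hon this.symm
    have hμ'eq : μ' = (k + (b : ℤ), μ'.2) := prod_eta' μ' _ hμ'1
    have hνeq : ν = (k + (b : ℤ) + 1, ν.2) := prod_eta' ν _ hν1'
    -- (T3) contrapositive
    have hT3 : ¬ (dist (x (k + (b:ℤ), μ'.2)) (x (k + (b:ℤ) + 1, ν.2)) < α₂ * r ^ (k + (b:ℤ))) := by
      intro hlt2
      have := hT.T3 (k + (b:ℤ)) μ'.2 ν.2 (by rw [← hμ'eq]; exact hμ'I)
        (by rw [← hνeq]; exact hνI) hlt2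
      rw [← hνeq, ← hμ'eq] at this
      exact hπνne this
    rw [← hμ'eq, ← hνeq] at hT3
    push_neg at hT3
    -- chain estimate from μ to ν
    have hchain := hT.dist_iter hr0 hr1 hα₁ c μ hμI
    rw [← hν] at hchain
    have hexp2 : μ.1 - (c : ℤ) = k + (b : ℤ) + 1 := by
      rw [hμ1]
      have : (c : ℤ) = (a : ℤ) - b - 1 := by omega
      rw [this]; ring
    rw [hexp2] at hchain
    have hrp : r ^ (k + (b:ℤ) + 1) = r ^ (k + (b:ℤ)) * r := zpow_add_one₀ (ne_of_gt hr0) _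
    have htb : 0 < r ^ (k + (b:ℤ)) := zpow_pos hr0 _
    have htri : dist (x μ') (x ν) ≤ dist (x μ') (x μ) + dist (x μ) (x ν) := dist_triangle _ _ _
    have hδle : δ ≤ α₂ - α₁ * r / (1 - r) := min_le_right _ _
    have hfin : δ * r ^ (k + (b:ℤ)) ≤ dist (x μ') (x μ) := by
      have h1 : α₁ * (r ^ (k + (b:ℤ)) * r) / (1 - r) =
          (α₁ * r / (1 - r)) * r ^ (k + (b:ℤ)) := by field_simp
      rw [hrp, h1] at hchain
      nlinarith [hT3, htri, hchain, htb, hδle]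
    rw [dist_comm] at hfin
    exact hfin

/-- A point whose branch at level `k` is `(k, n')` does not belong to `K_{(k,o)}` for `o ≠ n'`. -/
lemma SatisfiesT.not_mem_Kset (hT : SatisfiesT Cstar r α₁ α₂ α₃ I x π)
    (hnet : IsNetSystem cstar Cstar r I x)
    (hr0 : 0 < r) (hr1 : r < 1) (hα₁ : 0 < α₁) (hc : 0 < cstar)
    (hα₂' : α₁ * r / (1 - r) < α₂) :
    ∀ (k : ℤ) (o n' : ℕ), o ≠ n' → ∀ μ ∈ I, ∀ a : ℕ, π^[a] μ = (k, n') →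
      x μ ∉ Kset I x π (k, o) := by
  intro k o n' hon μ hμI a ha hmem
  have h1r : 0 < 1 - r := by linarith
  set δ := min cstar (α₂ - α₁ * r / (1 - r)) with hδ
  have hδ0 : 0 < δ := lt_min hc (by linarith)
  have hε : 0 < δ * r ^ (k + (a : ℤ)) := mul_pos hδ0 (zpow_pos hr0 _)
  rw [Kset, Metric.mem_closure_iff] at hmem
  obtain ⟨z, hz, hdz⟩ := hmem _ hε
  simp only [mem_iUnion, mem_image, mem_setOf_eq] at hz
  obtain ⟨b, μ', ⟨hμ'I, hb⟩, rfl⟩ := hz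
  have hkey : δ * r ^ (k + (a : ℤ)) ≤ dist (x μ) (x μ') := by
    rcases le_total b a with hba | hab
    · have := hT.branch_sep hnet hr0 hr1 hα₁ hc hα₂' k n' o (Ne.symm hon)
        μ hμI μ' hμ'I a b ha hb hba
      calc δ * r ^ (k + (a : ℤ)) ≤ δ * r ^ (k + (b : ℤ)) := by
            apply mul_le_mul_of_nonneg_left _ hδ0.le
            exact zpow_le_zpow_right_of_le_one₀ hr0 hr1.le (by omega)
      _ ≤ _ := this
    · have := hT.branch_sep hnet hr0 hr1 hα₁ hc hα₂' k o n' hon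
        μ' hμ'I μ hμI b a hb ha hab
      rw [dist_comm] at this
      exact this
  exact absurd hdz (not_lt.2 hkey)

/-- `K_{(k,o)}` is contained in a ball of radius comparable to `r^k` around `x (k,o)`. -/
lemma SatisfiesT.Kset_subset (hT : SatisfiesT Cstar r α₁ α₂ α₃ I x π)
    (hr0 : 0 < r) (hr1 : r < 1) (hα₁ : 0 < α₁) (k : ℤ) (o : ℕ) :
    Kset I x π (k, o) ⊆ closedBall (x (k, o)) (α₁ * r ^ k / (1 - r)) := by
  apply closure_minimal _ Metric.isClosed_closedBall
  intro z hz
  simp only [mem_iUnion, mem_image, mem_setOf_eq] at hz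
  obtain ⟨a, μ, ⟨hμI, ha⟩, rfl⟩ := hz
  have h1 := hT.dist_iter hr0 hr1 hα₁ a μ hμI
  rw [ha] at h1
  have h2 : μ.1 - (a : ℤ) = k := by
    have := (hT.iter_mem a μ hμI).2
    rw [ha] at this
    simp at this
    linarith
  rw [h2] at h1
  exact mem_closedBall.2 h1

/-- Only finitely many level-`k` net points lie in any fixed closed ball. -/
lemma IsNetSystem.finite_level (hnet : IsNetSystem cstar Cstar r I x) (hD : Doubling X)
    (hc : 0 < cstar) (hr0 : 0 < r) (k : ℤ) (y : X) (R : ℝ) :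
    {o : ℕ | (k, o) ∈ I ∧ x (k, o) ∈ closedBall y R}.Finite := by
  have hε : 0 < cstar * r ^ k := mul_pos hc (zpow_pos hr0 k)
  have hinj : Set.InjOn (fun o => x ((k : ℤ), o))
      {o : ℕ | (k, o) ∈ I ∧ x (k, o) ∈ closedBall y R} := by
    intro o ho o' ho' h
    by_contra hne
    have := hnet.separated k o o' ho.1 ho'.1 hne
    simp only at h
    rw [h, dist_self] at this
    linarith
  apply Set.Finite.of_finite_image _ hinj
  apply hD.finite_of_separated hε y R
  · rintro _ ⟨o, ho, rfl⟩
    exact ho.2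
  · rintro _ ⟨o, ho, rfl⟩ _ ⟨o', ho', rfl⟩ hne
    exact hnet.separated k o o' ho.1 ho'.1 (by rintro rfl; exact hne rfl)

/-- Every point of `X` belongs to some level-`k` set `K_{(k,o)}`. -/
lemma SatisfiesT.exists_mem_Kset (hT : SatisfiesT Cstar r α₁ α₂ α₃ I x π)
    (hnet : IsNetSystem cstar Cstar r I x) (hD : Doubling X)
    (hc : 0 < cstar) (hCs : 0 < Cstar) (hr0 : 0 < r) (hr1 : r < 1) (hα₁ : 0 < α₁)
    (y : X) (k : ℤ) : ∃ o : ℕ, (k, o) ∈ I ∧ y ∈ Kset I x π (k, o) := by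
  classical
  have h1r : 0 < 1 - r := by linarith
  choose nn hnnI hnnd using fun j : ℕ => hnet.covering y (k + j)
  set lam : ℕ → ℤ × ℕ := fun j => ((k + j : ℤ), nn j) with hlam
  have hlamI : ∀ j, lam j ∈ I := fun j => hnnI j
  set β : ℕ → ℤ × ℕ := fun j => π^[j] (lam j) with hβ
  have hβI : ∀ j, β j ∈ I := fun j => (hT.iter_mem j (lam j) (hlamI j)).1
  have hβ1 : ∀ j, (β j).1 = k := by
    intro j
    have h := (hT.iter_mem j (lam j) (hlamI j)).2
    rw [hβ]
    simp only
    rw [h]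
    simp [hlam]
  have hβeq : ∀ j, β j = (k, (β j).2) := fun j => prod_eta' (β j) k (hβ1 j)
  set R₀ := Cstar * r ^ k + α₁ * r ^ k / (1 - r) with hR₀
  have hβball : ∀ j, x (k, (β j).2) ∈ closedBall y R₀ := by
    intro j
    have hchain := hT.dist_iter hr0 hr1 hα₁ j (lam j) (hlamI j)
    have hexp : (lam j).1 - (j : ℤ) = k := by simp [hlam]
    rw [hexp] at hchain
    have hd := hnnd j
    have hrr : Cstar * r ^ (k + (j : ℤ)) ≤ Cstar * r ^ k := by
      apply mul_le_mul_of_nonneg_left _ hCs.le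
      exact zpow_le_zpow_right_of_le_one₀ hr0 hr1.le (by omega)
    have htri : dist y (x (β j)) ≤ dist y (x (lam j)) + dist (x (lam j)) (x (β j)) :=
      dist_triangle _ _ _
    rw [mem_closedBall, ← hβeq j, dist_comm]
    calc dist y (x (β j)) ≤ dist y (x (lam j)) + dist (x (lam j)) (x (β j)) := htri
    _ ≤ Cstar * r ^ (k + (j : ℤ)) + α₁ * r ^ k / (1 - r) := by
        apply add_le_add hd.le hchain
    _ ≤ R₀ := by rw [hR₀]; linarith
  set T := {o : ℕ | (k, o) ∈ I ∧ x (k, o) ∈ closedBall y R₀} with hT'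
  have hTfin : T.Finite := hnet.finite_level hD hc hr0 k y R₀
  haveI := hTfin.to_subtype
  set g : ℕ → T := fun j => ⟨(β j).2, ⟨by rw [← hβeq j]; exact hβI j, hβball j⟩⟩ with hg
  obtain ⟨t, ht⟩ := Finite.exists_infinite_fiber g
  have hfib : (g ⁻¹' {t}).Infinite := Set.infinite_coe_iff.mp ht
  refine ⟨(t : ℕ), t.2.1, ?_⟩
  rw [Kset, Metric.mem_closure_iff]
  intro ε hε
  have hCk : 0 < Cstar * r ^ k := mul_pos hCs (zpow_pos hr0 k)
  obtain ⟨j₀, hj₀⟩ := exists_pow_lt_of_lt_one (x := ε / (Cstar * r ^ k)) (y := r)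
    (by positivity) hr1
  obtain ⟨j, hjfib, hjgt⟩ := hfib.exists_gt j₀
  have hgj : (β j).2 = (t : ℕ) := congrArg Subtype.val hjfib
  refine ⟨x (lam j), ?_, ?_⟩
  · simp only [mem_iUnion, mem_image, mem_setOf_eq]
    refine ⟨j, lam j, ⟨hlamI j, ?_⟩, rfl⟩
    have hb : π^[j] (lam j) = β j := rfl
    rw [hb, hβeq j, hgj]
  · have hd := hnnd j
    have h1 : r ^ (k + (j : ℤ)) = r ^ k * r ^ (j : ℕ) := by
      rw [zpow_add₀ (ne_of_gt hr0), zpow_natCast]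
    have h2 : r ^ (j : ℕ) ≤ r ^ j₀ := pow_le_pow_of_le_one hr0.le hr1.le hjgt.le
    have h3 : Cstar * r ^ k * r ^ j₀ < ε := by
      rw [lt_div_iff₀ hCk] at hj₀
      nlinarith [hj₀]
    calc dist y (x (lam j)) < Cstar * r ^ (k + (j : ℤ)) := hd
    _ = Cstar * r ^ k * r ^ (j : ℕ) := by rw [h1]; ring
    _ ≤ Cstar * r ^ k * r ^ j₀ := by nlinarith [hCk, h2]
    _ < ε := h3

/-- The union of the level-`k` sets `K_{(k,o)}` over `o ≠ n` is closed. -/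
lemma SatisfiesT.isClosed_bUnion (hT : SatisfiesT Cstar r α₁ α₂ α₃ I x π)
    (hnet : IsNetSystem cstar Cstar r I x) (hD : Doubling X)
    (hc : 0 < cstar) (hr0 : 0 < r) (hr1 : r < 1) (hα₁ : 0 < α₁) (k : ℤ) (n : ℕ) :
    IsClosed (⋃ o ∈ {o : ℕ | (k, o) ∈ I ∧ o ≠ n}, Kset I x π (k, o)) := by
  classical
  have h1r : 0 < 1 - r := by linarith
  set F : ℕ → Set X := fun o =>
    if (k, o) ∈ I ∧ o ≠ n then Kset I x π (k, o) else ∅ with hF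
  have hUeq : (⋃ o ∈ {o : ℕ | (k, o) ∈ I ∧ o ≠ n}, Kset I x π (k, o)) = ⋃ o, F o := by
    ext z
    simp only [mem_iUnion, mem_setOf_eq, hF]
    constructor
    · rintro ⟨o, ho, hz⟩
      exact ⟨o, by rw [if_pos ho]; exact hz⟩
    · rintro ⟨o, hz⟩
      by_cases ho : (k, o) ∈ I ∧ o ≠ n
      · rw [if_pos ho] at hz
        exact ⟨o, ho, hz⟩
      · rw [if_neg ho] at hz
        exact absurd hz (notMem_empty z)
  rw [hUeq]
  apply LocallyFinite.isClosed_iUnion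
  · intro y
    refine ⟨ball y 1, ball_mem_nhds y one_pos, ?_⟩
    apply Set.Finite.subset (hnet.finite_level hD hc hr0 k y (1 + α₁ * r ^ k / (1 - r)))
    intro o ho
    obtain ⟨z, hz1, hz2⟩ := ho
    by_cases hcase : (k, o) ∈ I ∧ o ≠ n
    · rw [hF] at hz1
      simp only [if_pos hcase] at hz1
      refine ⟨hcase.1, ?_⟩
      have hzb := hT.Kset_subset hr0 hr1 hα₁ k o hz1
      rw [mem_closedBall] at hzb ⊢
      have htri : dist (x ((k : ℤ), o)) y ≤ dist (x ((k : ℤ), o)) z + dist z y :=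
        dist_triangle _ _ _
      rw [dist_comm (x ((k : ℤ), o)) z] at htri
      have hzy : dist z y < 1 := mem_ball.1 hz2
      linarith
    · rw [hF] at hz1
      simp only [if_neg hcase] at hz1
      exact absurd hz1 (notMem_empty z)
  · intro o
    rw [hF]
    dsimp only
    split
    · exact isClosed_closure
    · exact isClosed_empty

end AuxNet

/-- Lemma: with `O_{k,n} = X \ ⋃_{o ≠ n} K_{k,o}`, one has `O_{k,n} = int K_{k,n}`
and `cl O_{k,n} = K_{k,n}`. -/
theorem Oset_interior_closure
    {X : Type*} [MetricSpace X] [CompleteSpace X]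
    (hD : Doubling X) (hUP : UniformlyPerfect X)
    (cstar Cstar α₁ α₂ α₃ r₀ r : ℝ) (hc : 0 < cstar) (hcC : cstar < Cstar)
    (hα₁ : 0 < α₁) (hα₂ : 0 < α₂) (hα₃ : 0 < α₃)
    (hr₀0 : 0 < r₀) (hr₀1 : r₀ < 1)
    (hcond : r₀ / (1 - r₀) * α₁ < min α₂ (α₃ - Cstar))
    (hr0 : 0 < r) (hrr₀ : r ≤ r₀)
    (I : Set (ℤ × ℕ)) (x : ℤ × ℕ → X) (hnet : IsNetSystem cstar Cstar r I x)
    (π : ℤ × ℕ → ℤ × ℕ) (hπ : SatisfiesT Cstar r α₁ α₂ α₃ I x π)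
    :
    ∀ (k : ℤ) (n : ℕ), (k, n) ∈ I →
      (univ \ ⋃ o ∈ {o : ℕ | (k, o) ∈ I ∧ o ≠ n}, Kset I x π (k, o)) =
        interior (Kset I x π (k, n)) ∧
      closure (univ \ ⋃ o ∈ {o : ℕ | (k, o) ∈ I ∧ o ≠ n}, Kset I x π (k, o)) =
        Kset I x π (k, n) := by
  intro k n hkn
  have hr1 : r < 1 := lt_of_le_of_lt hrr₀ hr₀1
  have h1r : 0 < 1 - r := by linarith
  have hCs : 0 < Cstar := lt_trans hc hcC
  have hα₂' : α₁ * r / (1 - r) < α₂ := by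
    have h1 : r / (1 - r) ≤ r₀ / (1 - r₀) :=
      div_le_div₀ hr₀0.le hrr₀ (by linarith) (by linarith)
    have h2 : r / (1 - r) * α₁ ≤ r₀ / (1 - r₀) * α₁ :=
      mul_le_mul_of_nonneg_right h1 hα₁.le
    calc α₁ * r / (1 - r) = r / (1 - r) * α₁ := by ring
    _ ≤ r₀ / (1 - r₀) * α₁ := h2
    _ < α₂ := lt_of_lt_of_le hcond (min_le_left _ _)
  set C := ⋃ o ∈ {o : ℕ | (k, o) ∈ I ∧ o ≠ n}, Kset I x π (k, o) with hCdef
  have hCclosed : IsClosed C := hπ.isClosed_bUnion hnet hD hc hr0 hr1 hα₁ k n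
  have hOopen : IsOpen (univ \ C) := by
    rw [Set.diff_eq, Set.univ_inter]
    exact hCclosed.isOpen_compl
  have hOK : univ \ C ⊆ Kset I x π (k, n) := by
    intro y hy
    obtain ⟨o, hoI, hyK⟩ := hπ.exists_mem_Kset hnet hD hc hCs hr0 hr1 hα₁ y k
    by_cases hon : o = n
    · rwa [hon] at hyK
    · exact absurd (mem_biUnion (show o ∈ {o : ℕ | (k, o) ∈ I ∧ o ≠ n} from ⟨hoI, hon⟩) hyK)
        hy.2
  have hIntO : interior (Kset I x π (k, n)) ⊆ univ \ C := by
    intro z hz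
    refine ⟨trivial, ?_⟩
    intro hzC
    obtain ⟨o, ho, hzK⟩ := mem_iUnion₂.1 hzC
    rw [Kset, _root_.mem_closure_iff] at hzK
    obtain ⟨w, hwmem⟩ := hzK _ isOpen_interior hz
    obtain ⟨hwInt, hwU⟩ := hwmem
    simp only [mem_iUnion, mem_image, mem_setOf_eq] at hwU
    obtain ⟨a, μ, ⟨hμI, ha⟩, rfl⟩ := hwU
    exact hπ.not_mem_Kset hnet hr0 hr1 hα₁ hc hα₂' k n o (Ne.symm ho.2)
      μ hμI a ha (interior_subset hwInt)
  constructor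
  · exact Subset.antisymm (interior_maximal hOK hOopen) hIntO
  · apply Subset.antisymm
    · exact closure_minimal hOK isClosed_closure
    · have hU : (⋃ l : ℕ, x '' {lam | lam ∈ I ∧ π^[l] lam = ((k : ℤ), n)}) ⊆ univ \ C := by
        intro w hw
        simp only [mem_iUnion, mem_image, mem_setOf_eq] at hw
        obtain ⟨a, μ, ⟨hμI, ha⟩, rfl⟩ := hw
        refine ⟨trivial, ?_⟩
        intro hwC
        obtain ⟨o, ho, hwK⟩ := mem_iUnion₂.1 hwC
        exact hπ.not_mem_Kset hnet hr0 hr1 hα₁ hc hα₂' k o n ho.2 μ hμI a ha hwK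
      calc Kset I x π (k, n)
          = closure (⋃ l : ℕ, x '' {lam | lam ∈ I ∧ π^[l] lam = ((k : ℤ), n)}) := rfl
      _ ⊆ closure (univ \ C) := closure_mono hU
end

section
/- Under the standing assumptions (complete doubling uniformly perfect (X,d), net system with parameters (c*, C*, r), r ∈ (0,r₀], map π satisfying (T1)–(T5) with (r₀/(1−r₀))·α₁ < min(α₂, α₃ − C*)), if l ≥ k and x_{l,m} ∈ K_{k,n} for some indices (l,m), (k,n) ∈ Ω, then π^{l−k}(l,m) = (k,n). -/
open Metric Set

/-- Lemma: if `l ≥ k` and `x_{l,m} ∈ K_{k,n}`, then `π^{l-k}(l,m) = (k,n)`. -/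
theorem point_in_Kset_ancestor
    {X : Type*} [MetricSpace X] [CompleteSpace X]
    (hD : Doubling X) (hUP : UniformlyPerfect X)
    (cstar Cstar α₁ α₂ α₃ r₀ r : ℝ) (hc : 0 < cstar) (hcC : cstar < Cstar)
    (hα₁ : 0 < α₁) (hα₂ : 0 < α₂) (hα₃ : 0 < α₃)
    (hr₀0 : 0 < r₀) (hr₀1 : r₀ < 1)
    (hcond : r₀ / (1 - r₀) * α₁ < min α₂ (α₃ - Cstar))
    (hr0 : 0 < r) (hrr₀ : r ≤ r₀)
    (I : Set (ℤ × ℕ)) (x : ℤ × ℕ → X) (hnet : IsNetSystem cstar Cstar r I x)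
    (π : ℤ × ℕ → ℤ × ℕ) (hπ : SatisfiesT Cstar r α₁ α₂ α₃ I x π)
    :
    ∀ (k l : ℤ) (n m : ℕ), k ≤ l → (l, m) ∈ I → (k, n) ∈ I →
      x (l, m) ∈ Kset I x π (k, n) → π^[(l - k).toNat] (l, m) = (k, n) := by

  intro k l n m hkl hlm hkn hK
  obtain ⟨a, hka⟩ := Int.le.dest hkl
  have hto : (l - k).toNat = a := by omega
  have hr1 : r < 1 := lt_of_le_of_lt hrr₀ hr₀1
  have h1r : (0:ℝ) < 1 - r := by linarith
  have hrpos : ∀ t : ℤ, (0:ℝ) < r ^ t := fun t => zpow_pos hr0 t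
  -- basic step: π maps I into I, dropping level by 1, with distance < α₁ r^(level-1)
  have hstep : ∀ lam : ℤ × ℕ, lam ∈ I → π lam ∈ I ∧ (π lam).1 = lam.1 - 1 ∧
      dist (x lam) (x (π lam)) < α₁ * r ^ (lam.1 - 1) := by
    intro lam hlam
    have heq : ((lam.1 - 1) + 1, lam.2) = lam := by
      rw [sub_add_cancel]
    have h1 := hπ.maps_into (lam.1 - 1) lam.2 (by rw [heq]; exact hlam)
    have h2 := hπ.T2 (lam.1 - 1) lam.2 (by rw [heq]; exact hlam)
    rw [heq] at h1 h2
    exact ⟨h1.1, by omega, h2⟩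
  -- iterated chain
  have chain : ∀ (s : ℕ) (lam : ℤ × ℕ), lam ∈ I → π^[s] lam ∈ I ∧
      (π^[s] lam).1 = lam.1 - s ∧
      dist (x lam) (x (π^[s] lam)) ≤ α₁ * r ^ (lam.1 - s) / (1 - r) := by
    intro s
    induction s with
    | zero =>
      intro lam hlam
      refine ⟨hlam, by simp, ?_⟩
      simp only [Function.iterate_zero_apply, dist_self]
      positivity
    | succ s ih =>
      intro lam hlam
      obtain ⟨hmem, hlev, hdist⟩ := ih lam hlam
      obtain ⟨hmem', hlev', hdist'⟩ := hstep _ hmem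
      rw [Function.iterate_succ_apply']
      refine ⟨hmem', by rw [hlev', hlev]; push_cast; ring, ?_⟩
      have htri := dist_triangle (x lam) (x (π^[s] lam)) (x (π (π^[s] lam)))
      have hE : α₁ * r ^ (lam.1 - s) / (1 - r) + α₁ * r ^ ((π^[s] lam).1 - 1)
          = α₁ * r ^ (lam.1 - (s+1:ℕ)) / (1 - r) := by
        rw [hlev]
        have e1 : lam.1 - (s:ℤ) = (lam.1 - ((s:ℕ)+1:ℕ)) + 1 := by push_cast; ring
        have e2 : lam.1 - (s:ℤ) - 1 = (lam.1 - ((s:ℕ)+1:ℕ)) := by push_cast; ring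
        rw [e2, e1, zpow_add₀ (ne_of_gt hr0)]
        field_simp
        ring
      calc dist (x lam) (x (π (π^[s] lam))) ≤ _ := htri
        _ ≤ α₁ * r ^ (lam.1 - s) / (1 - r) + α₁ * r ^ ((π^[s] lam).1 - 1) := by
            have := le_of_lt hdist'
            linarith
        _ = _ := hE
  -- key numeric bound
  have hrq : r / (1 - r) ≤ r₀ / (1 - r₀) := by
    rw [div_le_div_iff₀ h1r (by linarith)]
    nlinarith
  have hkey : ∀ t : ℤ, α₁ * r ^ (t + 1) / (1 - r) < α₂ * r ^ t := by
    intro t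
    have h2 : r₀ / (1 - r₀) * α₁ < α₂ := lt_of_lt_of_le hcond (min_le_left _ _)
    have h3 : r / (1 - r) * α₁ < α₂ := by
      have : r / (1 - r) * α₁ ≤ r₀ / (1 - r₀) * α₁ :=
        mul_le_mul_of_nonneg_right hrq (le_of_lt hα₁)
      linarith
    have h4 : r / (1 - r) * α₁ * r ^ t < α₂ * r ^ t :=
      mul_lt_mul_of_pos_right h3 (hrpos t)
    calc α₁ * r ^ (t + 1) / (1 - r) = r / (1 - r) * α₁ * r ^ t := by
          rw [zpow_add₀ (ne_of_gt hr0)]; field_simp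
      _ < α₂ * r ^ t := h4
  -- T3 helper
  have hT3' : ∀ (t : ℤ) (lam ν : ℤ × ℕ), lam ∈ I → ν ∈ I → lam.1 = t → ν.1 = t + 1 →
      dist (x lam) (x ν) < α₂ * r ^ t → π ν = lam := by
    intro t lam ν hl hν h1 h2 hd
    have he1 : (t, lam.2) = lam := by rw [← h1]
    have he2 : (t + 1, ν.2) = ν := by rw [← h2]
    have := hπ.T3 t lam.2 ν.2 (by rw [he1]; exact hl) (by rw [he2]; exact hν)
      (by rw [he1, he2]; exact hd)
    rw [he1, he2] at this
    exact this
  obtain ⟨ε₀, hε₀pos, hε₀⟩ : ∃ e : ℝ, 0 < e ∧ e = α₂ * r ^ l - α₁ * r ^ (l + 1) / (1 - r) :=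
    ⟨_, by have := hkey l; linarith, rfl⟩
  -- the main dichotomy
  have main : ∃ lam : ℤ × ℕ, ∃ j : ℕ, lam ∈ I ∧ π^[j] lam = (k, n) ∧
      ((a + 1 ≤ j ∧ dist (x lam) (x (l, m)) < ε₀) ∨ (j ≤ a ∧ x lam = x (l, m))) := by
    have hlevel : ∀ (lam : ℤ × ℕ) (j : ℕ), lam ∈ I → π^[j] lam = (k, n) →
        lam.1 = k + j := by
      intro lam j h1 h2
      have := (chain j lam h1).2.1
      rw [h2] at this
      simp at this
      omega
    by_cases hA : ∃ lam : ℤ × ℕ, ∃ j : ℕ, lam ∈ I ∧ π^[j] lam = (k, n) ∧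
        a + 1 ≤ j ∧ dist (x lam) (x (l, m)) < ε₀
    · obtain ⟨lam, j, h1, h2, h3, h4⟩ := hA
      exact ⟨lam, j, h1, h2, Or.inl ⟨h3, h4⟩⟩
    · push_neg at hA
      obtain ⟨δ, hδpos, hδε, h2δ⟩ : ∃ d : ℝ, 0 < d ∧ d < ε₀ ∧ 2 * d ≤ cstar * r ^ l := by
        refine ⟨min ε₀ (cstar * r ^ l) / 2, ?_, ?_, ?_⟩
        · have : 0 < cstar * r ^ l := mul_pos hc (hrpos l)
          have := lt_min hε₀pos this
          linarith
        · have h1 : min ε₀ (cstar * r ^ l) ≤ ε₀ := min_le_left _ _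
          linarith
        · have h1 : min ε₀ (cstar * r ^ l) ≤ cstar * r ^ l := min_le_right _ _
          linarith
      set F : Set (ℤ × ℕ) := {lam | lam ∈ I ∧ (∃ j : ℕ, π^[j] lam = (k, n)) ∧
        dist (x lam) (x (l, m)) < δ} with hF
      -- any lam in F has level between k and l
      have hFlev : ∀ lam ∈ F, k ≤ lam.1 ∧ lam.1 ≤ l := by
        intro lam hlam
        obtain ⟨h1, ⟨j, h2⟩, h3⟩ := hlam
        have hl1 := hlevel lam j h1 h2
        constructor
        · omega
        · by_contra hcon
          push_neg at hcon
          have hj : a + 1 ≤ j := by omega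
          exact absurd (lt_trans h3 hδε) (by simpa using hA lam j h1 h2 hj)
      -- F is finite
      have hFfin : F.Finite := by
        have hsub : F ⊆ ⋃ t ∈ Set.Icc k l, {lam ∈ F | lam.1 = t} := by
          intro lam hlam
          obtain ⟨h1, h2⟩ := hFlev lam hlam
          exact Set.mem_biUnion (Set.mem_Icc.2 ⟨h1, h2⟩) ⟨hlam, rfl⟩
        refine Set.Finite.subset (Set.Finite.biUnion (Set.finite_Icc k l) ?_) hsub
        intro t ht
        apply Set.Subsingleton.finite
        intro lam hlam lam' hlam'
        by_contra hne
        have hfst : lam.1 = lam'.1 := by rw [hlam.2, hlam'.2]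
        have hsnd : lam.2 ≠ lam'.2 := by
          intro h; exact hne (Prod.ext hfst h)
        have he1 : (t, lam.2) = lam := by rw [← hlam.2]
        have he2 : (t, lam'.2) = lam' := by rw [← hlam'.2]
        have hsep := hnet.separated t lam.2 lam'.2 (by rw [he1]; exact hlam.1.1)
          (by rw [he2]; exact hlam'.1.1) hsnd
        rw [he1, he2] at hsep
        have htl : t ≤ l := (Set.mem_Icc.1 ht).2
        have hmono : cstar * r ^ l ≤ cstar * r ^ t :=
          mul_le_mul_of_nonneg_left
            (zpow_le_zpow_right_of_le_one₀ hr0 (le_of_lt hr1) htl) (le_of_lt hc)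
        have hd1 := hlam.1.2.2
        have hd2 := hlam'.1.2.2
        have htri := dist_triangle (x lam) (x (l, m)) (x lam')
        rw [dist_comm (x (l,m)) (x lam')] at htri
        linarith
      -- x (l,m) lies in the closure of S ∩ ball
      set S : Set X := ⋃ j : ℕ, x '' {lam | lam ∈ I ∧ π^[j] lam = (k, n)} with hS
      have hKS : x (l, m) ∈ closure S := hK
      have hcl : x (l, m) ∈ closure (S ∩ ball (x (l, m)) δ) := by
        rw [_root_.mem_closure_iff] at hKS ⊢
        intro o ho hxo
        obtain ⟨y, hy⟩ := hKS (o ∩ ball (x (l, m)) δ)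
          (ho.inter isOpen_ball) ⟨hxo, mem_ball_self hδpos⟩
        exact ⟨y, hy.1.1, hy.2, hy.1.2⟩
      have hsub2 : S ∩ ball (x (l, m)) δ ⊆ x '' F := by
        rintro y ⟨hyS, hyb⟩
        simp only [hS, Set.mem_iUnion, Set.mem_image, Set.mem_setOf_eq] at hyS
        obtain ⟨j, lam, ⟨h1, h2⟩, h3⟩ := hyS
        refine ⟨lam, ⟨h1, ⟨j, h2⟩, ?_⟩, h3⟩
        rw [h3]
        exact Metric.mem_ball.1 hyb
      have hclosed : IsClosed (x '' F) := (hFfin.image x).isClosed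
      have hmem : x (l, m) ∈ x '' F := by
        have := closure_mono hsub2 hcl
        rwa [hclosed.closure_eq] at this
      obtain ⟨lam, hlamF, hxeq⟩ := hmem
      obtain ⟨h1, ⟨j, h2⟩, h3⟩ := hlamF
      refine ⟨lam, j, h1, h2, Or.inr ⟨?_, hxeq⟩⟩
      have := (hFlev lam ⟨h1, ⟨j, h2⟩, h3⟩).2
      have hl1 := hlevel lam j h1 h2
      omega
  -- conclude from main
  obtain ⟨lam, j, hlamI, hlamπ, hcase⟩ := main
  have hlamlev : lam.1 = k + j := by
    have := (chain j lam hlamI).2.1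
    rw [hlamπ] at this
    simp at this
    omega
  rw [hto]
  rcases hcase with ⟨hj, hd⟩ | ⟨hj, hxeq⟩
  · -- deep descendant near x(l,m)
    obtain ⟨s, hs⟩ := Nat.exists_eq_add_of_le hj
    obtain ⟨hμI, hμlev, hμd⟩ := chain s lam hlamI
    set μ := π^[s] lam with hμ
    have hμ1 : μ.1 = l + 1 := by
      rw [hμlev, hlamlev]
      push_cast
      omega
    have hdb : dist (x (l, m)) (x μ) < α₂ * r ^ l := by
      have htri := dist_triangle (x (l, m)) (x lam) (x μ)
      rw [dist_comm (x (l,m)) (x lam)] at htri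
      have hb : α₁ * r ^ (lam.1 - s) / (1 - r) = α₁ * r ^ (l + 1) / (1 - r) := by
        rw [hlamlev]
        have he : (k:ℤ) + ↑j - ↑s = l + 1 := by omega
        rw [he]
      rw [hb] at hμd
      have := hkey l
      simp only [hε₀] at hd
      linarith
    have hpμ : π μ = (l, m) := hT3' l (l, m) μ hlm hμI rfl hμ1 hdb
    have hiter : π^[a] (l, m) = (k, n) := by
      have e1 : π^[a] (π μ) = π^[a + 1] μ := (Function.iterate_succ_apply π a μ).symm
      have e2 : π^[a + 1] (π^[s] lam) = π^[(a + 1) + s] lam :=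
        (Function.iterate_add_apply π (a + 1) s lam).symm
      have e3 : (a + 1) + s = j := by omega
      rw [← hpμ, e1, hμ, e2, e3, hlamπ]
    exact hiter
  · -- shallow descendant with x lam = x (l,m)
    by_cases hja : j = a
    · -- then lam = (l, m)
      have hlev : lam.1 = l := by omega
      have hlameq : lam = (l, m) := by
        by_contra hne
        have hsnd : lam.2 ≠ m := by
          intro h
          exact hne (Prod.ext hlev h)
        have he1 : (l, lam.2) = lam := by rw [← hlev]
        have hsep := hnet.separated l lam.2 m (by rw [he1]; exact hlamI) hlm hsnd
        rw [he1] at hsep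
        rw [hxeq] at hsep
        simp at hsep
        have := mul_pos hc (hrpos l)
        linarith
      rw [← hja, ← hlameq, hlamπ]
    · -- j < a
      have hjlt : j < a := by omega
      obtain ⟨s, hs⟩ := Nat.exists_eq_add_of_lt hjlt
      obtain ⟨hνI, hνlev, hνd⟩ := chain s (l, m) hlm
      set ν := π^[s] (l, m) with hν
      have hν1 : ν.1 = (k + j) + 1 := by
        rw [hνlev]
        show l - (s:ℤ) = (k + j) + 1
        push_cast
        omega
      have hdb : dist (x lam) (x ν) < α₂ * r ^ (k + (j:ℤ)) := by
        rw [← hxeq] at hνd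
        have hb : ((l:ℤ), m).1 - (s:ℤ) = (k + (j:ℤ)) + 1 := by
          show l - (s:ℤ) = (k + j) + 1
          push_cast
          omega
        rw [hb] at hνd
        have := hkey (k + (j:ℤ))
        linarith
      have hpν : π ν = lam := hT3' (k + (j:ℤ)) lam ν hlamI hνI hlamlev hν1 hdb
      have e2 : π^[j] (π^[s + 1] (l, m)) = π^[j + (s + 1)] (l, m) :=
        (Function.iterate_add_apply π j (s + 1) ((l : ℤ), m)).symm
      have e3 : j + (s + 1) = a := by omega
      have e4 : π^[s + 1] (l, m) = lam := by
        rw [Function.iterate_succ_apply', ← hν, hpν]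
      rw [← e3, ← e2, e4, hlamπ]
end

section
/- Under the standing assumptions (complete doubling uniformly perfect (X,d), net system with parameters (c*, C*, r), r ∈ (0,r₀], map π satisfying (T1)–(T5) with (r₀/(1−r₀))·α₁ < min(α₂, α₃ − C*)), if B(x_{k,n}, α₃ r^k) ∩ B(x_{k,o}, α₃ r^k) ≠ ∅, then K_{k,n} ∩ K_{k,o} ≠ ∅. -/
open Metric Set

/-!
Iterating (T4) from the kissing pair `(k, n), (k, o)` produces two chains of descendants,
`λ₁(l), λ₂(l) ∈ Ω_{k+l}` with `π λᵢ(l+1) = λᵢ(l)`, whose `α₃ r^{k+l}`-balls still meet at every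
level. By (T2) consecutive points of a chain are `α₁ r^{k+l}`-close, so each chain of points
converges geometrically in the complete space `X`; the two chains are `2 α₃ r^{k+l}`-close,
so they share their limit, which lies in both `K_{k,n}` and `K_{k,o}`.
-/

open Filter Topology

theorem exists_seq_of_forall_exists_succ {α : Type*} (P : ℕ → α → Prop) (R : ℕ → α → α → Prop)
    (step : ∀ l a, P l a → ∃ b, P (l + 1) b ∧ R l a b) {a₀ : α} (h₀ : P 0 a₀) :
    ∃ g : ℕ → α, g 0 = a₀ ∧ ∀ l, P l (g l) ∧ R l (g l) (g (l + 1)) := by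
  choose next hnextP hnextR using step
  let G : (l : ℕ) → {a // P l a} :=
    fun l => Nat.rec ⟨a₀, h₀⟩ (fun l a => ⟨next l a.1 a.2, hnextP l a.1 a.2⟩) l
  exact ⟨fun l => (G l).1, rfl, fun l => ⟨(G l).2, hnextR l (G l).1 (G l).2⟩⟩

section NetSystem

variable {X : Type*} [PseudoMetricSpace X] {Cstar r α₁ α₂ α₃ : ℝ} {I : Set (ℤ × ℕ)}
  {x : ℤ × ℕ → X} {π : ℤ × ℕ → ℤ × ℕ}

def Kissing (I : Set (ℤ × ℕ)) (x : ℤ × ℕ → X) (α₃ r : ℝ) (k : ℤ) (n o : ℕ) : Prop :=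
  (k, n) ∈ I ∧ (k, o) ∈ I ∧
    (ball (x (k, n)) (α₃ * r ^ k) ∩ ball (x (k, o)) (α₃ * r ^ k)).Nonempty

structure IsDescent (I : Set (ℤ × ℕ)) (π : ℤ × ℕ → ℤ × ℕ) (k : ℤ) (m : ℕ → ℕ) : Prop where
  mem : ∀ l : ℕ, (k + l, m l) ∈ I
  parent : ∀ l : ℕ, π (k + l + 1, m (l + 1)) = (k + l, m l)

namespace IsDescent

variable {k : ℤ} {m : ℕ → ℕ}

theorem iterate_parent (hm : IsDescent I π k m) (l : ℕ) : π^[l] (k + l, m l) = (k, m 0) := by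
  induction l with
  | zero => simp
  | succ l ih =>
    rw [Function.iterate_succ_apply, Nat.cast_succ, ← add_assoc, hm.parent, ih]

theorem mem_Kset_of_tendsto (hm : IsDescent I π k m) {p : X}
    (hp : Tendsto (fun l : ℕ => x (k + l, m l)) atTop (𝓝 p)) : p ∈ Kset I x π (k, m 0) :=
  mem_closure_of_tendsto hp <| Eventually.of_forall fun l =>
    mem_iUnion.2 ⟨l, _, ⟨hm.mem l, hm.iterate_parent l⟩, rfl⟩

theorem dist_succ_lt (hπ : SatisfiesT Cstar r α₁ α₂ α₃ I x π) (hm : IsDescent I π k m)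
    (l : ℕ) : dist (x (k + l, m l)) (x (k + (l + 1 : ℕ), m (l + 1))) < α₁ * r ^ (k + l) := by
  have hmem := hm.mem (l + 1)
  rw [Nat.cast_succ, ← add_assoc] at hmem ⊢
  simpa only [hm.parent, dist_comm] using hπ.T2 (k + l) (m (l + 1)) hmem

theorem cauchySeq (hπ : SatisfiesT Cstar r α₁ α₂ α₃ I x π) (hm : IsDescent I π k m)
    (hr0 : 0 < r) (hr1 : r < 1) : CauchySeq fun l : ℕ => x (k + l, m l) :=
  cauchySeq_of_le_geometric r (α₁ * r ^ k) hr1 fun l => by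
    have h := (hm.dist_succ_lt hπ l).le
    rwa [zpow_add₀ hr0.ne', zpow_natCast, ← mul_assoc] at h

end IsDescent

theorem SatisfiesT.exists_kissing_descents (hπ : SatisfiesT Cstar r α₁ α₂ α₃ I x π) {k : ℤ}
    {n o : ℕ} (h : Kissing I x α₃ r k n o) :
    ∃ m₁ m₂ : ℕ → ℕ, IsDescent I π k m₁ ∧ IsDescent I π k m₂ ∧ m₁ 0 = n ∧ m₂ 0 = o ∧
      ∀ l : ℕ, Kissing I x α₃ r (k + l) (m₁ l) (m₂ l) := by
  obtain ⟨g, hg0, hg⟩ := exists_seq_of_forall_exists_succ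
    (fun l (p : ℕ × ℕ) => Kissing I x α₃ r (k + l) p.1 p.2)
    (fun l (p q : ℕ × ℕ) =>
      π (k + l + 1, q.1) = (k + l, p.1) ∧ π (k + l + 1, q.2) = (k + l, p.2))
    (fun l p hp => by
      obtain ⟨m₁, m₂, hm₁, hm₂, hball, hπ₁, hπ₂⟩ := hπ.T4 (k + l) p.1 p.2 hp.1 hp.2.1 hp.2.2
      refine ⟨(m₁, m₂), ?_, hπ₁, hπ₂⟩
      rw [Nat.cast_succ, ← add_assoc]
      exact ⟨hm₁, hm₂, hball⟩)
    (a₀ := (n, o)) (by simpa using h)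
  refine ⟨fun l => (g l).1, fun l => (g l).2, ⟨fun l => (hg l).1.1, fun l => (hg l).2.1⟩,
    ⟨fun l => (hg l).1.2.1, fun l => (hg l).2.2⟩, by simp [hg0], by simp [hg0], fun l => (hg l).1⟩

theorem tendsto_dist_of_forall_kissing {k : ℤ} {m₁ m₂ : ℕ → ℕ} (hr0 : 0 < r) (hr1 : r < 1)
    (h : ∀ l : ℕ, Kissing I x α₃ r (k + l) (m₁ l) (m₂ l)) :
    Tendsto (fun l : ℕ => dist (x (k + l, m₁ l)) (x (k + l, m₂ l))) atTop (𝓝 0) := by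
  have hbound (l : ℕ) : dist (x (k + l, m₁ l)) (x (k + l, m₂ l)) ≤ 2 * α₃ * r ^ k * r ^ l := by
    have h := (dist_lt_add_of_nonempty_ball_inter_ball (h l).2.2).le
    rwa [zpow_add₀ hr0.ne', zpow_natCast, ← two_mul, ← mul_assoc, ← mul_assoc] at h
  refine squeeze_zero (fun _ => dist_nonneg) hbound ?_
  simpa using (tendsto_pow_atTop_nhds_zero_of_lt_one hr0.le hr1).const_mul (2 * α₃ * r ^ k)

end NetSystem

theorem Kset_kiss_general
    {X : Type*} [MetricSpace X] [CompleteSpace X]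
    (Cstar α₁ α₂ α₃ r₀ r : ℝ)
    (hr₀1 : r₀ < 1)
    (hr0 : 0 < r) (hrr₀ : r ≤ r₀)
    (I : Set (ℤ × ℕ)) (x : ℤ × ℕ → X)
    (π : ℤ × ℕ → ℤ × ℕ) (hπ : SatisfiesT Cstar r α₁ α₂ α₃ I x π)
    :
    ∀ (k : ℤ) (n o : ℕ), (k, n) ∈ I → (k, o) ∈ I →
      (ball (x (k, n)) (α₃ * r ^ k) ∩ ball (x (k, o)) (α₃ * r ^ k)).Nonempty →
      (Kset I x π (k, n) ∩ Kset I x π (k, o)).Nonempty := by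
  intro k n o hn ho hball
  have hr1 : r < 1 := hrr₀.trans_lt hr₀1
  obtain ⟨m₁, m₂, hm₁, hm₂, rfl, rfl, hkiss⟩ := hπ.exists_kissing_descents ⟨hn, ho, hball⟩
  obtain ⟨p, hp⟩ := cauchySeq_tendsto_of_complete (hm₁.cauchySeq hπ hr0 hr1)
  exact ⟨p, hm₁.mem_Kset_of_tendsto hp,
    hm₂.mem_Kset_of_tendsto (hp.congr_dist (tendsto_dist_of_forall_kissing hr0 hr1 hkiss))⟩

/-- Lemma: if the `α₃ r^k`-balls around `x_{k,n}` and `x_{k,o}` intersect, then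
`K_{k,n} ∩ K_{k,o} ≠ ∅`. -/
theorem Kset_kiss
    {X : Type*} [MetricSpace X] [CompleteSpace X]
    (hD : Doubling X) (hUP : UniformlyPerfect X)
    (cstar Cstar α₁ α₂ α₃ r₀ r : ℝ) (hc : 0 < cstar) (hcC : cstar < Cstar)
    (hα₁ : 0 < α₁) (hα₂ : 0 < α₂) (hα₃ : 0 < α₃)
    (hr₀0 : 0 < r₀) (hr₀1 : r₀ < 1)
    (hcond : r₀ / (1 - r₀) * α₁ < min α₂ (α₃ - Cstar))
    (hr0 : 0 < r) (hrr₀ : r ≤ r₀)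
    (I : Set (ℤ × ℕ)) (x : ℤ × ℕ → X) (hnet : IsNetSystem cstar Cstar r I x)
    (π : ℤ × ℕ → ℤ × ℕ) (hπ : SatisfiesT Cstar r α₁ α₂ α₃ I x π)
    :
    ∀ (k : ℤ) (n o : ℕ), (k, n) ∈ I → (k, o) ∈ I →
      (ball (x (k, n)) (α₃ * r ^ k) ∩ ball (x (k, o)) (α₃ * r ^ k)).Nonempty →
      (Kset I x π (k, n) ∩ Kset I x π (k, o)).Nonempty :=
  Kset_kiss_general Cstar α₁ α₂ α₃ r₀ r hr₀1 hr0 hrr₀ I x π hπ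
end

section
/- Let (T,π,φ) be a tree with a reference point, (Y,ρ) a metric space without isolated points, and K : T → C(Y,ρ) a partition of Y parametrized by (T,π,φ). Then for every w ∈ T, the compact set K_w has no isolated points. -/
open Metric Set

/-- `(T, f, φ)` is a *tree with a reference point*:
(H1) the set `F_f = {w : f^[n] w = w for some n ≥ 1}` has at most one element,
(H2) any two points have a common iterated image,
and `φ ∈ F_f` whenever `F_f ≠ ∅`. -/
def IsTreeRP {T : Type*} (f : T → T) (φ : T) : Prop :=
  {w : T | ∃ n : ℕ, 1 ≤ n ∧ f^[n] w = w}.Subsingleton ∧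
  (∀ w v : T, ∃ n m : ℕ, f^[n] w = f^[m] v) ∧
  ((∃ w : T, ∃ n : ℕ, 1 ≤ n ∧ f^[n] w = w) → ∃ n : ℕ, 1 ≤ n ∧ f^[n] φ = φ)

/-- `b w v = min {n ≥ 0 : f^[n] w = f^[m] v for some m ≥ 0}`. -/
def IsTreeB {T : Type*} (f : T → T) (b : T → T → ℕ) : Prop :=
  ∀ w v : T, IsLeast {n : ℕ | ∃ m : ℕ, f^[n] w = f^[m] v} (b w v)

/-- The level `[w] = b(w,φ) - b(φ,w)` of a vertex. -/
def treeLevel {T : Type*} (b : T → T → ℕ) (φ : T) (w : T) : ℤ :=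
  (b w φ : ℤ) - (b φ w : ℤ)

/-- `K : T → Set Y` is a *partition* of `Y` parametrized by the tree `(T, f, φ)`:
each `K w` is a nonempty compact set which is not a single point,
(P1) the level-0 sets cover `Y` and `K w = ⋃_{v ∈ f⁻¹(w)} K v`, and
(P2) the intersection along any descending chain is a single point. -/
def IsPartition {T : Type*} {Y : Type*} [MetricSpace Y]
    (f : T → T) (φ : T) (b : T → T → ℕ) (K : T → Set Y) : Prop :=
  (∀ w : T, IsCompact (K w)) ∧
  (∀ w : T, (K w).Nontrivial) ∧
  ((⋃ w ∈ {w : T | treeLevel b φ w = 0}, K w) = univ) ∧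
  (∀ w : T, (⋃ v ∈ {v : T | f v = w}, K v) = K w) ∧
  (∀ ws : ℤ → T, (∀ k : ℤ, f (ws (k + 1)) = ws k) →
    ∃ y : Y, (⋂ k : ℤ, K (ws k)) = {y})

/-!
Through a point `y ∈ K w` runs a descending chain `w = w₀ ← w₁ ← w₂ ← ⋯` of vertices with
`y ∈ K wₙ`, since `K w` is the union of the sets of the children of `w`; extended upwards by the
iterates `f^[n] w`, it is a bi-infinite chain, so by (P2) the compact sets `K wₙ` shrink to `{y}`.
Hence some `K wₙ ⊆ K w` lies in any given neighbourhood of `y`, and, not being a single point,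
it contains a point of `K w` other than `y`.
-/

section Chain

variable {T Y : Type*} {f : T → T} {K : T → Set Y}

theorem Function.exists_int_chain_extend {g : ℕ → T} (hg : ∀ n, f (g (n + 1)) = g n) :
    ∃ ws : ℤ → T, (∀ k, f (ws (k + 1)) = ws k) ∧ ∀ n : ℕ, ws n = g n := by
  refine ⟨fun k => if 0 ≤ k then g k.toNat else f^[(-k).toNat] (g 0), fun k => ?_,
    fun n => by simp⟩
  rcases lt_trichotomy k (-1) with hk | rfl | hk
  · have hsucc : (-k).toNat = (-(k + 1)).toNat + 1 := by omega
    simp only [if_neg (by omega : ¬ 0 ≤ k + 1), if_neg (by omega : ¬ 0 ≤ k), hsucc,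
      Function.iterate_succ_apply']
  · simp
  · have hsucc : (k + 1).toNat = k.toNat + 1 := by omega
    simp only [if_pos (by omega : 0 ≤ k + 1), if_pos (by omega : 0 ≤ k), hsucc, hg]

theorem subset_of_apply_eq (hcover : ∀ w, (⋃ v ∈ {v | f v = w}, K v) = K w) (v : T) :
    K v ⊆ K (f v) :=
  hcover (f v) ▸ subset_biUnion_of_mem (u := K) (show f v = f v from rfl)

theorem exists_apply_eq_mem (hcover : ∀ w, (⋃ v ∈ {v | f v = w}, K v) = K w) {w : T} {y : Y}
    (hy : y ∈ K w) : ∃ v, f v = w ∧ y ∈ K v := by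
  rw [← hcover w] at hy
  simpa using hy

theorem subset_of_chain_le (hcover : ∀ w, (⋃ v ∈ {v | f v = w}, K v) = K w) {ws : ℤ → T}
    (hws : ∀ k, f (ws (k + 1)) = ws k) {k j : ℤ} (hkj : k ≤ j) : K (ws j) ⊆ K (ws k) := by
  induction j, hkj using Int.leInduction with
  | base => exact subset_rfl
  | succ j _ ih => exact (hws j ▸ subset_of_apply_eq hcover (ws (j + 1))).trans ih

theorem iInter_chain_int_eq_nat (hcover : ∀ w, (⋃ v ∈ {v | f v = w}, K v) = K w)
    {ws : ℤ → T} (hws : ∀ k, f (ws (k + 1)) = ws k) : ⋂ k : ℤ, K (ws k) = ⋂ n : ℕ, K (ws n) :=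
  Subset.antisymm (subset_iInter fun n => iInter_subset _ (n : ℤ)) <| subset_iInter fun k =>
    (iInter_subset _ k.toNat).trans (subset_of_chain_le hcover hws (Int.self_le_toNat k))

theorem exists_nat_chain_mem (hcover : ∀ w, (⋃ v ∈ {v | f v = w}, K v) = K w) {w : T} {y : Y}
    (hy : y ∈ K w) : ∃ g : ℕ → T, g 0 = w ∧ (∀ n, f (g (n + 1)) = g n) ∧ ∀ n, y ∈ K (g n) := by
  have step (u : {u // y ∈ K u}) : ∃ v : {u // y ∈ K u}, f v = u :=
    let ⟨v, hvu, hv⟩ := exists_apply_eq_mem hcover u.2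
    ⟨⟨v, hv⟩, hvu⟩
  choose child hchild using step
  refine ⟨fun n => (child^[n] ⟨w, hy⟩).1, rfl, fun n => ?_, fun n => (child^[n] ⟨w, hy⟩).2⟩
  simp only [Function.iterate_succ_apply', hchild]

end Chain

theorem mem_closure_diff_singleton_of_antitone {X : Type*} [TopologicalSpace X] [T2Space X]
    {V : ℕ → Set X} {s : Set X} {y : X} (hV : Antitone V) (hV_cpct : ∀ n, IsCompact (V n))
    (hV_nontriv : ∀ n, (V n).Nontrivial) (hVs : ∀ n, V n ⊆ s) (hVy : ⋂ n, V n ⊆ {y}) :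
    y ∈ closure (s \ {y}) := by
  rw [mem_closure_iff_nhds]
  intro U hU
  obtain ⟨n, hn⟩ := exists_subset_nhds_of_isCompact hV.directed_ge hV_cpct
    fun x hx => (hVy hx : x = y) ▸ hU
  obtain ⟨z, hz, hzy⟩ := (hV_nontriv n).exists_ne y
  exact ⟨z, hn hz, hVs n hz, hzy⟩

theorem partition_no_isolated_points_general {T : Type*} {Y : Type*} [MetricSpace Y]
    (f : T → T) (φ : T) (b : T → T → ℕ) (K : T → Set Y)
    (hK : IsPartition f φ b K) :
    ∀ w : T, ∀ y ∈ K w, y ∈ closure (K w \ {y}) := by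
  obtain ⟨hcomp, hnontriv, -, hcover, hchain⟩ := hK
  intro w y hy
  obtain ⟨g, hg0, hg, hyg⟩ := exists_nat_chain_mem hcover hy
  obtain ⟨ws, hws, hwsg⟩ := Function.exists_int_chain_extend hg
  have hws0 : ws 0 = w := by simpa [hg0] using hwsg 0
  have hmono {k j : ℤ} (hkj : k ≤ j) := subset_of_chain_le hcover hws hkj
  obtain ⟨y₀, hy₀⟩ := hchain ws hws
  rw [iInter_chain_int_eq_nat hcover hws] at hy₀
  have hy_mem : y ∈ ⋂ n : ℕ, K (ws n) := mem_iInter.2 fun n => hwsg n ▸ hyg n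
  obtain rfl : y = y₀ := by rwa [hy₀, mem_singleton_iff] at hy_mem
  exact mem_closure_diff_singleton_of_antitone (V := fun n : ℕ => K (ws n))
    (antitone_nat_of_succ_le fun n => by simpa using hmono (Int.le_add_one le_rfl))
    (fun n => hcomp _) (fun n => hnontriv _)
    (fun n => hws0 ▸ hmono (Int.natCast_nonneg n)) hy₀.subset

/-- If `Y` has no isolated points and `K` is a partition of `Y` parametrized by a tree
with a reference point, then every `K_w` has no isolated points. -/
theorem partition_no_isolated_points {T : Type*} {Y : Type*} [MetricSpace Y]
    [Countable T] (f : T → T) (φ : T) (b : T → T → ℕ) (K : T → Set Y)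
    (htree : IsTreeRP f φ) (hb : IsTreeB f b)
    (hY : ∀ y : Y, y ∈ closure ({y}ᶜ : Set Y))
    (hK : IsPartition f φ b K) :
    ∀ w : T, ∀ y ∈ K w, y ∈ closure (K w \ {y}) :=
  partition_no_isolated_points_general f φ b K hK
end
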